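/- arXiv:2103.17176 — 9 statements merged into one kernel-verified Lean document; each statement's English description precedes it below -/
import Mathlib

section
/- Let ε = diag(ε₁,ε₂,ε₃) and μ = diag(μ₁,μ₂,μ₃) be real diagonal 3×3 matrices with positive entries, and for ξ ∈ ℝ³ let b(ξ) be the matrix of the cross product, b(ξ)v = ξ × v. Define M_E(ξ) = −ε⁻¹ b(ξ) μ⁻¹ b(ξ). Then for every ω ∈ ℝ, det(M_E(ξ) − ω² I₃) = −ω²(ω⁴ − ω² q₀(ξ) + q₁(ξ)), where q₀(ξ) = ξ₁²(1/(ε₂μ₃)+1/(μ₂ε₃)) + ξ₂²(1/(ε₁μ₃)+1/(μ₁ε₃)) + ξ₃²(1/(ε₁μ₂)+1/(ε₂μ₁)) and q₁(ξ) = (ε₁ξ₁²+ε₂ξ₂²+ε₃ξ₃²)(μ₁ξ₁²+μ₂ξ₂²+μ₃ξ₃²)/(ε₁ε₂ε₃μ₁μ₂μ₃). -/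
open Matrix

set_option maxHeartbeats 1000000 in
/-- Determinant formula for `M_E(ξ) - ω² I₃`: the Fresnel polynomial. -/
theorem stmt0 (ε₁ ε₂ ε₃ μ₁ μ₂ μ₃ : ℝ)
    (hε₁ : 0 < ε₁) (hε₂ : 0 < ε₂) (hε₃ : 0 < ε₃)
    (hμ₁ : 0 < μ₁) (hμ₂ : 0 < μ₂) (hμ₃ : 0 < μ₃)
    (ω : ℝ) (ξ : Fin 3 → ℝ) :
    let ε : Matrix (Fin 3) (Fin 3) ℝ := Matrix.diagonal ![ε₁, ε₂, ε₃]
    let μ : Matrix (Fin 3) (Fin 3) ℝ := Matrix.diagonal ![μ₁, μ₂, μ₃]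
    let b : Matrix (Fin 3) (Fin 3) ℝ :=
      !![0, -ξ 2, ξ 1; ξ 2, 0, -ξ 0; -ξ 1, ξ 0, 0]
    let ME : Matrix (Fin 3) (Fin 3) ℝ := -(ε⁻¹ * b * μ⁻¹ * b)
    let q₀ : ℝ := (ξ 0) ^ 2 * (1 / (ε₂ * μ₃) + 1 / (μ₂ * ε₃))
      + (ξ 1) ^ 2 * (1 / (ε₁ * μ₃) + 1 / (μ₁ * ε₃))
      + (ξ 2) ^ 2 * (1 / (ε₁ * μ₂) + 1 / (ε₂ * μ₁))
    let q₁ : ℝ := (ε₁ * (ξ 0) ^ 2 + ε₂ * (ξ 1) ^ 2 + ε₃ * (ξ 2) ^ 2)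
      * (μ₁ * (ξ 0) ^ 2 + μ₂ * (ξ 1) ^ 2 + μ₃ * (ξ 2) ^ 2) / (ε₁ * ε₂ * ε₃ * μ₁ * μ₂ * μ₃)
    (ME - ω ^ 2 • (1 : Matrix (Fin 3) (Fin 3) ℝ)).det
      = -ω ^ 2 * (ω ^ 4 - ω ^ 2 * q₀ + q₁) := by
  intro ε μ b ME q₀ q₁
  set x := ξ 0; set y := ξ 1; set z := ξ 2
  have hε : ε⁻¹ = Matrix.diagonal ![ε₁⁻¹, ε₂⁻¹, ε₃⁻¹] := by
    apply Matrix.inv_eq_right_inv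
    rw [show ε = Matrix.diagonal ![ε₁, ε₂, ε₃] from rfl, Matrix.diagonal_mul_diagonal]
    ext i j
    fin_cases i <;> fin_cases j <;>
      simp [Matrix.diagonal, Matrix.one_apply, hε₁.ne', hε₂.ne', hε₃.ne']
  have hμ : μ⁻¹ = Matrix.diagonal ![μ₁⁻¹, μ₂⁻¹, μ₃⁻¹] := by
    apply Matrix.inv_eq_right_inv
    rw [show μ = Matrix.diagonal ![μ₁, μ₂, μ₃] from rfl, Matrix.diagonal_mul_diagonal]
    ext i j
    fin_cases i <;> fin_cases j <;>
      simp [Matrix.diagonal, Matrix.one_apply, hμ₁.ne', hμ₂.ne', hμ₃.ne']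
  have hM : ME - ω ^ 2 • (1 : Matrix (Fin 3) (Fin 3) ℝ) =
      !![ε₁⁻¹*(μ₂⁻¹*z^2+μ₃⁻¹*y^2)-ω^2, -(ε₁⁻¹*μ₃⁻¹*x*y), -(ε₁⁻¹*μ₂⁻¹*x*z);
         -(ε₂⁻¹*μ₃⁻¹*x*y), ε₂⁻¹*(μ₁⁻¹*z^2+μ₃⁻¹*x^2)-ω^2, -(ε₂⁻¹*μ₁⁻¹*y*z);
         -(ε₃⁻¹*μ₂⁻¹*x*z), -(ε₃⁻¹*μ₁⁻¹*y*z), ε₃⁻¹*(μ₁⁻¹*y^2+μ₂⁻¹*x^2)-ω^2] := by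
    show -(ε⁻¹ * b * μ⁻¹ * b) - ω ^ 2 • (1 : Matrix (Fin 3) (Fin 3) ℝ) = _
    rw [hε, hμ]
    ext i j
    fin_cases i <;> fin_cases j <;>
      simp [Matrix.mul_apply, Fin.sum_univ_succ, Matrix.one_apply, b] <;>
      (first | tauto | (left; ring) | ring)
  rw [hM, Matrix.det_fin_three]
  simp only [Matrix.cons_val', Matrix.cons_val_zero, Matrix.cons_val_one, Matrix.head_cons,
    Matrix.head_fin_const, Matrix.cons_val_fin_one, Matrix.empty_val', Matrix.of_apply,
    Matrix.cons_val_two, Matrix.tail_cons]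
  show _ = -ω ^ 2 * (ω ^ 4 - ω ^ 2 * (x ^ 2 * (1 / (ε₂ * μ₃) + 1 / (μ₂ * ε₃))
      + y ^ 2 * (1 / (ε₁ * μ₃) + 1 / (μ₁ * ε₃))
      + z ^ 2 * (1 / (ε₁ * μ₂) + 1 / (ε₂ * μ₁)))
      + (ε₁ * x ^ 2 + ε₂ * y ^ 2 + ε₃ * z ^ 2)
      * (μ₁ * x ^ 2 + μ₂ * y ^ 2 + μ₃ * z ^ 2) / (ε₁ * ε₂ * ε₃ * μ₁ * μ₂ * μ₃))
  field_simp
  ring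
end

section
/- Let 0 < ε₁ < ε₂ < ε₃ and let 𝒩(η) = 1 − q₀*(η) + q₁*(η) with q₀*(η) = η₁²(1/ε₂+1/ε₃) + η₂²(1/ε₁+1/ε₃) + η₃²(1/ε₁+1/ε₂) and q₁*(η) = (ε₁η₁²+ε₂η₂²+ε₃η₃²)(η₁²+η₂²+η₃²)/(ε₁ε₂ε₃). Then a point η ∈ ℝ³ satisfies 𝒩(η)=0 and ∇𝒩(η)=0 if and only if η₂ = 0, η₁² = ε₃(ε₁−ε₂)/(ε₁−ε₃) and η₃² = ε₁(ε₃−ε₂)/(ε₃−ε₁). In particular there are exactly four such singular points. -/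
/-!
Write `x = (η 0)²`, `y = (η 1)²`, `z = (η 2)²`, `S = x + y + z` and `Q = ε₁x + ε₂y + ε₃z`. Then
`ε₁ε₂ε₃ 𝒩 = P(x, y, z)` with `P = ε₁ε₂ε₃ - (linear form) + QS`, and `∂𝒩/∂ηᵢ` is `2ηᵢ ∂P/∂xᵢ` up to
the factor `ε₁ε₂ε₃`, so singular points are the zeros of `P` with `xᵢ ∂P/∂xᵢ = 0` for all `i`.
Euler's relation for the homogeneous parts of `P` then gives `QS = ε₁ε₂ε₃`. If two partials
`∂P/∂xᵢ`, `∂P/∂xⱼ` vanish, then `S = εₖ` and `Q = εᵢεⱼ` for the third index `k`; as `Q / S` is a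
weighted mean of the `ε`'s this forces `{i, j} = {1, 3}`. A single vanishing partial would give
`(εⱼ + εₖ) / 2 = √(εⱼεₖ)`, and none at all `P = ε₁ε₂ε₃ ≠ 0`. Hence `y = 0` and `x`, `z` solve
`x + z = ε₂`, `ε₁x + ε₃z = ε₁ε₃`.
-/

/-- The (normalized) Fresnel polynomial `𝒩(η) = 1 - q₀*(η) + q₁*(η)`. -/
noncomputable def fresnelN (ε₁ ε₂ ε₃ : ℝ) (η : Fin 3 → ℝ) : ℝ :=
  1 - ((η 0) ^ 2 * (1 / ε₂ + 1 / ε₃) + (η 1) ^ 2 * (1 / ε₁ + 1 / ε₃)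
      + (η 2) ^ 2 * (1 / ε₁ + 1 / ε₂))
    + (ε₁ * (η 0) ^ 2 + ε₂ * (η 1) ^ 2 + ε₃ * (η 2) ^ 2)
      * ((η 0) ^ 2 + (η 1) ^ 2 + (η 2) ^ 2) / (ε₁ * ε₂ * ε₃)

open ContinuousLinearMap

theorem sum_smul_proj_eq_zero_iff {𝕜 ι : Type*} [NontriviallyNormedField 𝕜] [Fintype ι]
    [DecidableEq ι] {g : ι → 𝕜} :
    ∑ i, g i • proj (R := 𝕜) (φ := fun _ : ι => 𝕜) i = 0 ↔ g = 0 := by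
  refine ⟨fun h => funext fun j => ?_, fun h => by ext v; simp [h]⟩
  simpa [Pi.single_apply] using congr($h (Pi.single j 1))

theorem eq_of_two_mul_eq_add_of_sq_eq_mul {R : Type*} [CommRing R] [NoZeroDivisors R]
    {b c x : R} (h₁ : 2 * x = b + c) (h₂ : x ^ 2 = b * c) : b = c := by
  have h : (b - c) ^ 2 = 0 := by linear_combination (-(2 * x + b + c)) * h₁ + 4 * h₂
  exact sub_eq_zero.1 (pow_eq_zero_iff two_ne_zero |>.1 h)

theorem ncard_setOf_sq_eq {A : ℝ} (hA : 0 < A) : {s : ℝ | s ^ 2 = A}.ncard = 2 := by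
  have h : {s : ℝ | s ^ 2 = A} = {√A, -√A} := by
    ext s
    rw [Set.mem_ofPred_eq, ← Real.sq_sqrt hA.le, sq_eq_sq_iff_eq_or_eq_neg, Real.sq_sqrt hA.le]
    rfl
  rw [h, Set.ncard_pair]
  have := Real.sqrt_pos.2 hA
  linarith

/-- The polynomial `P` with `ε₁ε₂ε₃ 𝒩(η) = P((η 0)², (η 1)², (η 2)²)`. -/
def fresnelSq (a b c x y z : ℝ) : ℝ :=
  a * b * c - (x * a * (b + c) + y * b * (a + c) + z * c * (a + b))
    + (a * x + b * y + c * z) * (x + y + z)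

namespace FresnelSq

variable {a b c x y z : ℝ}

theorem eq_of_critical_pair (S Q : ℝ) (hab : a ≠ b) (ha : a * S + Q = a * (b + c))
    (hb : b * S + Q = b * (a + c)) : S = c ∧ Q = a * b := by
  have hS : S = c := mul_left_cancel₀ (sub_ne_zero.2 hab) (by linear_combination ha - hb)
  exact ⟨hS, by linear_combination ha - a * hS⟩

theorem middle_eq_zero (ha : 0 < a) (hab : a < b) (hbc : b < c) (hy : 0 ≤ y) (hz : 0 ≤ z)
    (hE : (a * x + b * y + c * z) * (x + y + z) = a * b * c)
    (hGx : x * (a * (x + y + z) + (a * x + b * y + c * z) - a * (b + c)) = 0)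
    (hGy : y * (b * (x + y + z) + (a * x + b * y + c * z) - b * (a + c)) = 0)
    (hGz : z * (c * (x + y + z) + (a * x + b * y + c * z) - c * (a + b)) = 0) : y = 0 := by
  by_contra hy0
  have hy' : 0 < y := lt_of_le_of_ne hy (Ne.symm hy0)
  have hGy' := sub_eq_zero.1 ((mul_eq_zero.1 hGy).resolve_left hy0)
  rcases eq_or_ne x 0 with rfl | hx0
  · rcases eq_or_ne z 0 with rfl | hz0
    · refine (hab.trans hbc).ne (eq_of_two_mul_eq_add_of_sq_eq_mul (x := y) ?_ ?_) <;>
        refine mul_left_cancel₀ (ha.trans hab).ne' ?_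
      · linear_combination hGy'
      · linear_combination hE
    · have hGz' := sub_eq_zero.1 ((mul_eq_zero.1 hGz).resolve_left hz0)
      obtain ⟨hS, hQ⟩ := eq_of_critical_pair (0 + y + z) (a * 0 + b * y + c * z) hbc.ne
        (c := a) (by linear_combination hGy') (by linear_combination hGz')
      nlinarith
  · have hGx' := sub_eq_zero.1 ((mul_eq_zero.1 hGx).resolve_left hx0)
    obtain ⟨hS, hQ⟩ := eq_of_critical_pair (x + y + z) (a * x + b * y + c * z) hab.ne
      (c := c) (by linear_combination hGx') (by linear_combination hGy')
    nlinarith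

theorem eq_of_critical (ha : 0 < a) (hab : a < b) (hbc : b < c) (hy : 0 ≤ y) (hz : 0 ≤ z)
    (hN : fresnelSq a b c x y z = 0)
    (hGx : x * (a * (x + y + z) + (a * x + b * y + c * z) - a * (b + c)) = 0)
    (hGy : y * (b * (x + y + z) + (a * x + b * y + c * z) - b * (a + c)) = 0)
    (hGz : z * (c * (x + y + z) + (a * x + b * y + c * z) - c * (a + b)) = 0) :
    y = 0 ∧ x = c * (a - b) / (a - c) ∧ z = a * (c - b) / (c - a) := by
  have hb := ha.trans hab
  have hc := hb.trans hbc
  have hE : (a * x + b * y + c * z) * (x + y + z) = a * b * c := by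
    unfold fresnelSq at hN
    linear_combination hGx + hGy + hGz - hN
  obtain rfl := middle_eq_zero ha hab hbc hy hz hE hGx hGy hGz
  have hx0 : x ≠ 0 := by
    rintro rfl
    rcases eq_or_ne z 0 with rfl | hz0
    · nlinarith [mul_pos (mul_pos ha hb) hc]
    · refine hab.ne (eq_of_two_mul_eq_add_of_sq_eq_mul (x := z) ?_ ?_) <;>
        refine mul_left_cancel₀ hc.ne' ?_
      · linear_combination (mul_eq_zero.1 hGz).resolve_left hz0
      · linear_combination hE
  have hz0 : z ≠ 0 := by
    rintro rfl
    refine hbc.ne (eq_of_two_mul_eq_add_of_sq_eq_mul (x := x) ?_ ?_) <;>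
      refine mul_left_cancel₀ ha.ne' ?_
    · linear_combination (mul_eq_zero.1 hGx).resolve_left hx0
    · linear_combination hE
  obtain ⟨hS, hQ⟩ := eq_of_critical_pair (x + 0 + z) (a * x + b * 0 + c * z) (hab.trans hbc).ne
    (c := b) (by linear_combination (mul_eq_zero.1 hGx).resolve_left hx0)
    (by linear_combination (mul_eq_zero.1 hGz).resolve_left hz0)
  have hac : a - c ≠ 0 := sub_ne_zero.2 (hab.trans hbc).ne
  have hca : c - a ≠ 0 := sub_ne_zero.2 (hab.trans hbc).ne'
  refine ⟨rfl, ?_, ?_⟩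
  · rw [eq_div_iff hac]; linear_combination hQ - c * hS
  · rw [eq_div_iff hca]; linear_combination hQ - a * hS

theorem critical_of_eq (hac : a ≠ c) (hy : y = 0) (hx : x = c * (a - b) / (a - c))
    (hz : z = a * (c - b) / (c - a)) :
    fresnelSq a b c x y z = 0
      ∧ x * (a * (x + y + z) + (a * x + b * y + c * z) - a * (b + c)) = 0
      ∧ y * (b * (x + y + z) + (a * x + b * y + c * z) - b * (a + c)) = 0
      ∧ z * (c * (x + y + z) + (a * x + b * y + c * z) - c * (a + b)) = 0 := by
  subst hy
  have hac' : a - c ≠ 0 := sub_ne_zero.2 hac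
  have hca' : c - a ≠ 0 := sub_ne_zero.2 hac.symm
  have hS : x + 0 + z = b := by rw [hx, hz]; field_simp; ring
  have hQ : a * x + b * 0 + c * z = a * c := by rw [hx, hz]; field_simp; ring
  unfold fresnelSq
  refine ⟨?_, ?_, by ring, ?_⟩ <;> rw [hS, hQ]
  · linear_combination -b * hQ - a * c * hS
  · ring
  · ring

end FresnelSq

section Gradient

variable {ε₁ ε₂ ε₃ : ℝ}

theorem fresnelN_eq_fresnelSq_div (hE : ε₁ * ε₂ * ε₃ ≠ 0) (η : Fin 3 → ℝ) :
    fresnelN ε₁ ε₂ ε₃ η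
      = fresnelSq ε₁ ε₂ ε₃ (η 0 ^ 2) (η 1 ^ 2) (η 2 ^ 2) / (ε₁ * ε₂ * ε₃) := by
  simp only [ne_eq, mul_eq_zero, not_or] at hE
  obtain ⟨⟨h₁, h₂⟩, h₃⟩ := hE
  unfold fresnelN fresnelSq
  field_simp
  ring

theorem hasFDerivAt_fresnelN (hE : ε₁ * ε₂ * ε₃ ≠ 0) (η : Fin 3 → ℝ) :
    HasFDerivAt (fresnelN ε₁ ε₂ ε₃)
      (∑ i, (2 * η i / (ε₁ * ε₂ * ε₃) * ![
          ε₁ * (η 0 ^ 2 + η 1 ^ 2 + η 2 ^ 2) + (ε₁ * η 0 ^ 2 + ε₂ * η 1 ^ 2 + ε₃ * η 2 ^ 2)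
            - ε₁ * (ε₂ + ε₃),
          ε₂ * (η 0 ^ 2 + η 1 ^ 2 + η 2 ^ 2) + (ε₁ * η 0 ^ 2 + ε₂ * η 1 ^ 2 + ε₃ * η 2 ^ 2)
            - ε₂ * (ε₁ + ε₃),
          ε₃ * (η 0 ^ 2 + η 1 ^ 2 + η 2 ^ 2) + (ε₁ * η 0 ^ 2 + ε₂ * η 1 ^ 2 + ε₃ * η 2 ^ 2)
            - ε₃ * (ε₁ + ε₂)] i) • proj (R := ℝ) (φ := fun _ : Fin 3 => ℝ) i) η := by
  have sq (i : Fin 3) := (hasFDerivAt_apply (𝕜 := ℝ) i η).pow 2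
  have hS := ((sq 0).add (sq 1)).add (sq 2)
  have hQ := (((sq 0).const_mul ε₁).add ((sq 1).const_mul ε₂)).add ((sq 2).const_mul ε₃)
  have hL := (((sq 0).const_mul (ε₁ * (ε₂ + ε₃))).add ((sq 1).const_mul (ε₂ * (ε₁ + ε₃)))).add
    ((sq 2).const_mul (ε₃ * (ε₁ + ε₂)))
  have hN := ((((hasFDerivAt_const (ε₁ * ε₂ * ε₃) η).sub hL).add (hQ.mul hS)).mul_const
    (ε₁ * ε₂ * ε₃)⁻¹)
  refine (hN.congr_fderiv ?_).congr_of_eventuallyEq (.of_forall fun ξ => ?_)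
  · ext v
    simp [Fin.sum_univ_three]
    ring
  · simp only [fresnelN_eq_fresnelSq_div hE, fresnelSq, Pi.add_apply, Pi.sub_apply, Pi.mul_apply]
    ring

theorem fderiv_fresnelN_eq_zero_iff (hE : ε₁ * ε₂ * ε₃ ≠ 0) (η : Fin 3 → ℝ) :
    fderiv ℝ (fresnelN ε₁ ε₂ ε₃) η = 0 ↔
      η 0 ^ 2 * (ε₁ * (η 0 ^ 2 + η 1 ^ 2 + η 2 ^ 2)
          + (ε₁ * η 0 ^ 2 + ε₂ * η 1 ^ 2 + ε₃ * η 2 ^ 2) - ε₁ * (ε₂ + ε₃)) = 0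
      ∧ η 1 ^ 2 * (ε₂ * (η 0 ^ 2 + η 1 ^ 2 + η 2 ^ 2)
          + (ε₁ * η 0 ^ 2 + ε₂ * η 1 ^ 2 + ε₃ * η 2 ^ 2) - ε₂ * (ε₁ + ε₃)) = 0
      ∧ η 2 ^ 2 * (ε₃ * (η 0 ^ 2 + η 1 ^ 2 + η 2 ^ 2)
          + (ε₁ * η 0 ^ 2 + ε₂ * η 1 ^ 2 + ε₃ * η 2 ^ 2) - ε₃ * (ε₁ + ε₂)) = 0 := by
  rw [(hasFDerivAt_fresnelN hE η).fderiv, sum_smul_proj_eq_zero_iff, funext_iff]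
  simp [Fin.forall_fin_succ, hE]

end Gradient

theorem fresnelN_singular_iff {ε₁ ε₂ ε₃ : ℝ} (h₀ : 0 < ε₁) (h₁₂ : ε₁ < ε₂) (h₂₃ : ε₂ < ε₃)
    (η : Fin 3 → ℝ) :
    (fresnelN ε₁ ε₂ ε₃ η = 0 ∧ fderiv ℝ (fresnelN ε₁ ε₂ ε₃) η = 0) ↔
      (η 1 = 0 ∧ η 0 ^ 2 = ε₃ * (ε₁ - ε₂) / (ε₁ - ε₃)
        ∧ η 2 ^ 2 = ε₁ * (ε₃ - ε₂) / (ε₃ - ε₁)) := by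
  have hE : ε₁ * ε₂ * ε₃ ≠ 0 := by
    have := h₀.trans h₁₂; have := h₀.trans (h₁₂.trans h₂₃); positivity
  rw [fresnelN_eq_fresnelSq_div hE, div_eq_zero_iff, or_iff_left hE,
    fderiv_fresnelN_eq_zero_iff hE, ← sq_eq_zero_iff (a := η 1)]
  constructor
  · rintro ⟨hN, hG₀, hG₁, hG₂⟩
    exact FresnelSq.eq_of_critical h₀ h₁₂ h₂₃ (sq_nonneg _) (sq_nonneg _) hN hG₀ hG₁ hG₂
  · rintro ⟨h₁, h₀, h₂⟩
    exact FresnelSq.critical_of_eq (h₁₂.trans h₂₃).ne h₁ h₀ h₂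

theorem ncard_setOf_one_eq_zero_sq_eq {A B : ℝ} (hA : 0 < A) (hB : 0 < B) :
    {η : Fin 3 → ℝ | η 1 = 0 ∧ η 0 ^ 2 = A ∧ η 2 ^ 2 = B}.ncard = 4 := by
  have hinj : (fun p : ℝ × ℝ => ![p.1, 0, p.2]).Injective := fun p q h =>
    Prod.ext (congrFun h 0) (congrFun h 2)
  have hset : {η : Fin 3 → ℝ | η 1 = 0 ∧ η 0 ^ 2 = A ∧ η 2 ^ 2 = B}
      = (fun p : ℝ × ℝ => ![p.1, 0, p.2]) '' ({s | s ^ 2 = A} ×ˢ {t | t ^ 2 = B}) := by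
    ext η
    constructor
    · rintro ⟨h₁, h₀, h₂⟩
      exact ⟨(η 0, η 2), ⟨h₀, h₂⟩, funext fun i => by fin_cases i <;> simp [h₁]⟩
    · rintro ⟨p, ⟨h₀, h₂⟩, rfl⟩
      exact ⟨rfl, h₀, h₂⟩
  rw [hset, Set.ncard_image_of_injective _ hinj, Set.ncard_prod, ncard_setOf_sq_eq hA,
    ncard_setOf_sq_eq hB]

/-- Characterization of the singular points of the Fresnel surface: a point `η` satisfies
`𝒩(η) = 0` and `∇𝒩(η) = 0` if and only if `η₂ = 0`, `η₁² = ε₃(ε₁-ε₂)/(ε₁-ε₃)` and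
`η₃² = ε₁(ε₃-ε₂)/(ε₃-ε₁)`; in particular there are exactly four singular points. -/
theorem stmt3 (ε₁ ε₂ ε₃ : ℝ) (h₀ : 0 < ε₁) (h₁₂ : ε₁ < ε₂) (h₂₃ : ε₂ < ε₃) :
    (∀ η : Fin 3 → ℝ,
      (fresnelN ε₁ ε₂ ε₃ η = 0 ∧ fderiv ℝ (fresnelN ε₁ ε₂ ε₃) η = 0) ↔
        (η 1 = 0 ∧ (η 0) ^ 2 = ε₃ * (ε₁ - ε₂) / (ε₁ - ε₃)
          ∧ (η 2) ^ 2 = ε₁ * (ε₃ - ε₂) / (ε₃ - ε₁))) ∧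
    {η : Fin 3 → ℝ |
        fresnelN ε₁ ε₂ ε₃ η = 0 ∧ fderiv ℝ (fresnelN ε₁ ε₂ ε₃) η = 0}.ncard = 4 := by
  have hchar := fresnelN_singular_iff h₀ h₁₂ h₂₃
  refine ⟨hchar, ?_⟩
  rw [Set.ext hchar]
  exact ncard_setOf_one_eq_zero_sq_eq (div_pos_of_neg_of_neg (by nlinarith) (by linarith))
    (div_pos (by nlinarith) (by linarith))
end

section
/- Let ε₁, ε₂, ε₃ be pairwise distinct positive reals and let M be the symmetric 3×3 matrix with diagonal entries 2ε₁, 2ε₂, 2ε₃ and off-diagonal entries M_{ij} = εᵢ + εⱼ for i ≠ j. Then the system M(x₁,x₂,x₃)ᵀ = (ε₁(ε₂+ε₃), ε₂(ε₁+ε₃), ε₃(ε₁+ε₂))ᵀ has no solution (x₁,x₂,x₃) ∈ ℝ³; equivalently, applying the adjugate of M to the right-hand side gives the nonzero vector ((ε₂−ε₃)²(ε₁−ε₂)(ε₁−ε₃), (ε₁−ε₃)²(ε₂−ε₁)(ε₂−ε₃), (ε₁−ε₂)²(ε₃−ε₁)(ε₃−ε₂)) while adj(M)·M = 0. -/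
open Matrix

/-- The singular linear system excluding singular points of the Fresnel surface with all
coordinates nonzero: `M x = v` has no solution, `adj(M)·v` is the stated nonzero vector,
and `adj(M)·M = 0`. -/
theorem stmt4 (ε₁ ε₂ ε₃ : ℝ) (h₁ : 0 < ε₁) (h₂ : 0 < ε₂) (h₃ : 0 < ε₃)
    (h₁₂ : ε₁ ≠ ε₂) (h₂₃ : ε₂ ≠ ε₃) (h₁₃ : ε₁ ≠ ε₃) :
    let M : Matrix (Fin 3) (Fin 3) ℝ :=
      !![2 * ε₁, ε₁ + ε₂, ε₁ + ε₃; ε₁ + ε₂, 2 * ε₂, ε₂ + ε₃; ε₁ + ε₃, ε₂ + ε₃, 2 * ε₃]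
    let v : Fin 3 → ℝ := ![ε₁ * (ε₂ + ε₃), ε₂ * (ε₁ + ε₃), ε₃ * (ε₁ + ε₂)]
    (¬ ∃ x : Fin 3 → ℝ, M.mulVec x = v) ∧
    M.adjugate.mulVec v
      = ![(ε₂ - ε₃) ^ 2 * (ε₁ - ε₂) * (ε₁ - ε₃),
          (ε₁ - ε₃) ^ 2 * (ε₂ - ε₁) * (ε₂ - ε₃),
          (ε₁ - ε₂) ^ 2 * (ε₃ - ε₁) * (ε₃ - ε₂)] ∧
    M.adjugate.mulVec v ≠ 0 ∧
    M.adjugate * M = 0 := by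
  intro M v
  have hdet : M.det = 0 := by
    simp [M, Matrix.det_fin_three]; ring
  have hadjM : M.adjugate * M = 0 := by
    rw [Matrix.adjugate_mul, hdet, zero_smul]
  have hadjv : M.adjugate.mulVec v
      = ![(ε₂ - ε₃) ^ 2 * (ε₁ - ε₂) * (ε₁ - ε₃),
          (ε₁ - ε₃) ^ 2 * (ε₂ - ε₁) * (ε₂ - ε₃),
          (ε₁ - ε₂) ^ 2 * (ε₃ - ε₁) * (ε₃ - ε₂)] := by
    funext i
    fin_cases i <;>
      simp [M, v, Matrix.adjugate_fin_three, Matrix.mulVec, dotProduct,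
        Fin.sum_univ_three] <;> ring
  have hne : M.adjugate.mulVec v ≠ 0 := by
    rw [hadjv]
    intro h
    have h0 := congrFun h 0
    simp only [Matrix.cons_val_zero, Pi.zero_apply] at h0
    exact mul_ne_zero (mul_ne_zero (pow_ne_zero _ (sub_ne_zero.mpr h₂₃))
      (sub_ne_zero.mpr h₁₂)) (sub_ne_zero.mpr h₁₃) h0
  refine ⟨?_, hadjv, hne, hadjM⟩
  rintro ⟨x, hx⟩
  apply hne
  rw [← hx, Matrix.mulVec_mulVec, hadjM, Matrix.zero_mulVec]
end

section
/- Let 0 < ε₁ < ε₂ < ε₃, σ₁,σ₂,σ₃ ∈ {−1,+1}, and for parameters s,t with either ε₁<s<ε₂<t<ε₃ or ε₁<t<ε₂<s<ε₃ define Φᵢ(s,t) = σᵢ √( ε₁ε₂ε₃ (εᵢ−s)(t⁻¹−εᵢ⁻¹) / ((εᵢ−ε_{i+1})(εᵢ−ε_{i+2})) ) (indices mod 3). Then η = Φ(s,t) satisfies η₁²+η₂²+η₃² = s, ε₁η₁²+ε₂η₂²+ε₃η₃² = ε₁ε₂ε₃/t, and 𝒩(η) = 0, where 𝒩(η) = 1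 − q₀*(η) + q₁*(η) is the Fresnel polynomial. -/
/-- The Darboux parametrization of the Fresnel surface (indices mod 3). -/
noncomputable def darbouxPhi (ε σ : Fin 3 → ℝ) (s t : ℝ) (i : Fin 3) : ℝ :=
  σ i * Real.sqrt (ε 0 * ε 1 * ε 2 * (ε i - s) * (t⁻¹ - (ε i)⁻¹)
    / ((ε i - ε (i + 1)) * (ε i - ε (i + 2))))

set_option maxHeartbeats 2000000 in
/-- The point `η = Φ(s,t)` satisfies `|η|² = s`, `ε₁η₁²+ε₂η₂²+ε₃η₃² = ε₁ε₂ε₃/t`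
and lies on the Fresnel surface `𝒩(η) = 0`. -/
theorem stmt5 (ε σ : Fin 3 → ℝ) (h₀ : 0 < ε 0) (h₀₁ : ε 0 < ε 1) (h₁₂ : ε 1 < ε 2)
    (hσ : ∀ i, σ i = 1 ∨ σ i = -1) (s t : ℝ)
    (hst : (ε 0 < s ∧ s < ε 1 ∧ ε 1 < t ∧ t < ε 2)
      ∨ (ε 0 < t ∧ t < ε 1 ∧ ε 1 < s ∧ s < ε 2)) :
    let η : Fin 3 → ℝ := darbouxPhi ε σ s t
    (η 0) ^ 2 + (η 1) ^ 2 + (η 2) ^ 2 = s ∧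
    ε 0 * (η 0) ^ 2 + ε 1 * (η 1) ^ 2 + ε 2 * (η 2) ^ 2 = ε 0 * ε 1 * ε 2 / t ∧
    fresnelN (ε 0) (ε 1) (ε 2) η = 0 := by
  intro η
  have hb : (0:ℝ) < ε 1 := h₀.trans h₀₁
  have hc : (0:ℝ) < ε 2 := hb.trans h₁₂
  have hs0 : ε 0 < s := by rcases hst with ⟨h1,h2,h3,h4⟩|⟨h1,h2,h3,h4⟩ <;> linarith
  have hs2 : s < ε 2 := by rcases hst with ⟨h1,h2,h3,h4⟩|⟨h1,h2,h3,h4⟩ <;> linarith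
  have ht0 : ε 0 < t := by rcases hst with ⟨h1,h2,h3,h4⟩|⟨h1,h2,h3,h4⟩ <;> linarith
  have ht2 : t < ε 2 := by rcases hst with ⟨h1,h2,h3,h4⟩|⟨h1,h2,h3,h4⟩ <;> linarith
  have htpos : (0:ℝ) < t := h₀.trans ht0
  -- sign facts for inverses
  have hinv0 : t⁻¹ - (ε 0)⁻¹ ≤ 0 := by
    have := inv_anti₀ h₀ ht0.le
    linarith
  have hinv2 : 0 ≤ t⁻¹ - (ε 2)⁻¹ := by
    have := inv_anti₀ htpos ht2.le
    linarith
  have hinv1 : (ε 1 - s) * (t⁻¹ - (ε 1)⁻¹) ≤ 0 := by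
    rcases hst with ⟨h1,h2,h3,h4⟩|⟨h1,h2,h3,h4⟩
    · have h5 : t⁻¹ - (ε 1)⁻¹ ≤ 0 := by
        have := inv_anti₀ hb h3.le
        linarith
      exact mul_nonpos_of_nonneg_of_nonpos (by linarith) h5
    · have h5 : 0 ≤ t⁻¹ - (ε 1)⁻¹ := by
        have := inv_anti₀ htpos h2.le
        linarith
      exact mul_nonpos_of_nonpos_of_nonneg (by linarith) h5
  have habc : (0:ℝ) < ε 0 * ε 1 * ε 2 := by positivity
  -- nonnegativity of the sqrt arguments
  have harg0 : 0 ≤ ε 0 * ε 1 * ε 2 * (ε 0 - s) * (t⁻¹ - (ε 0)⁻¹)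
      / ((ε 0 - ε 1) * (ε 0 - ε 2)) := by
    apply div_nonneg
    · have h1 : ε 0 * ε 1 * ε 2 * (ε 0 - s) ≤ 0 :=
        mul_nonpos_of_nonneg_of_nonpos habc.le (by linarith)
      exact mul_nonneg_of_nonpos_of_nonpos h1 hinv0
    · have : (0:ℝ) < (ε 0 - ε 1) * (ε 0 - ε 2) :=
        mul_pos_of_neg_of_neg (by linarith) (by linarith)
      exact this.le
  have harg1 : 0 ≤ ε 0 * ε 1 * ε 2 * (ε 1 - s) * (t⁻¹ - (ε 1)⁻¹)
      / ((ε 1 - ε 2) * (ε 1 - ε 0)) := by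
    have hnum : ε 0 * ε 1 * ε 2 * (ε 1 - s) * (t⁻¹ - (ε 1)⁻¹) ≤ 0 := by
      have := mul_nonneg habc.le (neg_nonneg.mpr hinv1)
      nlinarith [this]
    have hden : (ε 1 - ε 2) * (ε 1 - ε 0) < 0 :=
      mul_neg_of_neg_of_pos (by linarith) (by linarith)
    exact div_nonneg_of_nonpos hnum hden.le
  have harg2 : 0 ≤ ε 0 * ε 1 * ε 2 * (ε 2 - s) * (t⁻¹ - (ε 2)⁻¹)
      / ((ε 2 - ε 0) * (ε 2 - ε 1)) := by
    apply div_nonneg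
    · exact mul_nonneg (mul_nonneg habc.le (by linarith)) hinv2
    · have : (0:ℝ) < (ε 2 - ε 0) * (ε 2 - ε 1) :=
        mul_pos (by linarith) (by linarith)
      exact this.le
  have hσ0 : σ 0 ^ 2 = 1 := by rcases hσ 0 with h|h <;> rw [h] <;> norm_num
  have hσ1 : σ 1 ^ 2 = 1 := by rcases hσ 1 with h|h <;> rw [h] <;> norm_num
  have hσ2 : σ 2 ^ 2 = 1 := by rcases hσ 2 with h|h <;> rw [h] <;> norm_num
  have hsq0 : (η 0) ^ 2 = ε 0 * ε 1 * ε 2 * (ε 0 - s) * (t⁻¹ - (ε 0)⁻¹)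
      / ((ε 0 - ε 1) * (ε 0 - ε 2)) := by
    show (σ 0 * Real.sqrt _) ^ 2 = _
    rw [show ((0:Fin 3)+1) = 1 from rfl, show ((0:Fin 3)+2) = 2 from rfl,
      mul_pow, Real.sq_sqrt harg0, hσ0, one_mul]
  have hsq1 : (η 1) ^ 2 = ε 0 * ε 1 * ε 2 * (ε 1 - s) * (t⁻¹ - (ε 1)⁻¹)
      / ((ε 1 - ε 2) * (ε 1 - ε 0)) := by
    show (σ 1 * Real.sqrt _) ^ 2 = _
    rw [show ((1:Fin 3)+1) = 2 from rfl, show ((1:Fin 3)+2) = 0 from rfl,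
      mul_pow, Real.sq_sqrt harg1, hσ1, one_mul]
  have hsq2 : (η 2) ^ 2 = ε 0 * ε 1 * ε 2 * (ε 2 - s) * (t⁻¹ - (ε 2)⁻¹)
      / ((ε 2 - ε 0) * (ε 2 - ε 1)) := by
    show (σ 2 * Real.sqrt _) ^ 2 = _
    rw [show ((2:Fin 3)+1) = 0 from rfl, show ((2:Fin 3)+2) = 1 from rfl,
      mul_pow, Real.sq_sqrt harg2, hσ2, one_mul]
  have ha' : ε 0 ≠ 0 := ne_of_gt h₀
  have hb' : ε 1 ≠ 0 := ne_of_gt hb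
  have hc' : ε 2 ≠ 0 := ne_of_gt hc
  have ht' : t ≠ 0 := ne_of_gt htpos
  have hab : ε 0 - ε 1 ≠ 0 := by intro h; linarith
  have hac : ε 0 - ε 2 ≠ 0 := by intro h; linarith
  have hbc : ε 1 - ε 2 ≠ 0 := by intro h; linarith
  have hba : ε 1 - ε 0 ≠ 0 := by intro h; linarith
  have hca : ε 2 - ε 0 ≠ 0 := by intro h; linarith
  have hcb : ε 2 - ε 1 ≠ 0 := by intro h; linarith
  refine ⟨?_, ?_, ?_⟩
  · rw [hsq0, hsq1, hsq2]
    field_simp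
    ring
  · rw [hsq0, hsq1, hsq2]
    field_simp
    ring
  · rw [fresnelN, hsq0, hsq1, hsq2]
    field_simp
    ring
end

section
/- Let 0<ε₁<ε₂<ε₃ and define α(s,t) = (t−s)ε₁ε₂ε₃ / (s²t − (ε₁+ε₂+ε₃)st + (ε₁ε₂+ε₁ε₃+ε₂ε₃)t − ε₁ε₂ε₃). Then the Gaussian curvature of the Fresnel surface at Φ(s,t), given by K(s,t) = (st−(ε₁+ε₂)t+ε₁ε₂)(st−(ε₁+ε₃)t+ε₁ε₃)(st−(ε₂+ε₃)t+ε₂ε₃) / ((s−t)(s²t−(ε₁+ε₂+ε₃)st+(ε₁ε₂+ε₁ε₃+ε₂ε₃)t−ε₁ε₂ε₃)²), satisfies the identity K(s,t) = (α(s,t)−ε₁)(α(s,t)−ε₂)(α(s,t)−ε₃) / (α(s,t)(s−ε₁)(s−ε₂)(s−ε₃)). -/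
/-!
Write `D` for the denominator of `α` and `Q_{jk} = s t - (ε_j + ε_k) t + ε_j ε_k` for the factors
in the numerator of `K`. The whole identity rests on the factorisation
`ε_i D - (t - s) ε₁ ε₂ ε₃ = ε_i (s - ε_i) Q_{jk}` for `{i, j, k} = {1, 2, 3}`,
i.e. `α - ε_i = -ε_i (s - ε_i) Q_{jk} / D`. Multiplying the three factorisations, the product
`(s - ε₁)(s - ε₂)(s - ε₃)` and `ε₁ ε₂ ε₃` cancel against the same factors of the denominator
`α (s - ε₁)(s - ε₂)(s - ε₃)`, leaving `K`.
-/

namespace Fresnel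

variable {𝕜 : Type*} [Field 𝕜]

def tangentDenom (ε₁ ε₂ ε₃ s t : 𝕜) : 𝕜 :=
  s ^ 2 * t - (ε₁ + ε₂ + ε₃) * s * t + (ε₁ * ε₂ + ε₁ * ε₃ + ε₂ * ε₃) * t - ε₁ * ε₂ * ε₃

def tangentDistSq (ε₁ ε₂ ε₃ s t : 𝕜) : 𝕜 :=
  (t - s) * ε₁ * ε₂ * ε₃ / tangentDenom ε₁ ε₂ ε₃ s t

def curvature (ε₁ ε₂ ε₃ s t : 𝕜) : 𝕜 :=
  (s * t - (ε₁ + ε₂) * t + ε₁ * ε₂) * (s * t - (ε₁ + ε₃) * t + ε₁ * ε₃)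
    * (s * t - (ε₂ + ε₃) * t + ε₂ * ε₃) / ((s - t) * tangentDenom ε₁ ε₂ ε₃ s t ^ 2)

variable (ε₁ ε₂ ε₃ s t : 𝕜)

theorem tangentDenom_swap₁₂ : tangentDenom ε₂ ε₁ ε₃ s t = tangentDenom ε₁ ε₂ ε₃ s t := by
  unfold tangentDenom; ring

theorem tangentDenom_swap₁₃ : tangentDenom ε₃ ε₂ ε₁ s t = tangentDenom ε₁ ε₂ ε₃ s t := by
  unfold tangentDenom; ring

theorem tangentDistSq_swap₁₂ : tangentDistSq ε₂ ε₁ ε₃ s t = tangentDistSq ε₁ ε₂ ε₃ s t := by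
  rw [tangentDistSq, tangentDistSq, tangentDenom_swap₁₂]; ring

theorem tangentDistSq_swap₁₃ : tangentDistSq ε₃ ε₂ ε₁ s t = tangentDistSq ε₁ ε₂ ε₃ s t := by
  rw [tangentDistSq, tangentDistSq, tangentDenom_swap₁₃]; ring

theorem mul_tangentDenom_sub :
    ε₁ * tangentDenom ε₁ ε₂ ε₃ s t - (t - s) * ε₁ * ε₂ * ε₃
      = ε₁ * (s - ε₁) * (s * t - (ε₂ + ε₃) * t + ε₂ * ε₃) := by
  unfold tangentDenom; ring

variable {ε₁ ε₂ ε₃ s t}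

theorem tangentDistSq_sub (hD : tangentDenom ε₁ ε₂ ε₃ s t ≠ 0) :
    tangentDistSq ε₁ ε₂ ε₃ s t - ε₁
      = -(ε₁ * (s - ε₁) * (s * t - (ε₂ + ε₃) * t + ε₂ * ε₃)) / tangentDenom ε₁ ε₂ ε₃ s t := by
  rw [← mul_tangentDenom_sub, tangentDistSq, eq_div_iff hD, sub_mul, div_mul_cancel₀ _ hD]
  ring

theorem curvature_eq (h₁ : ε₁ ≠ 0) (h₂ : ε₂ ≠ 0) (h₃ : ε₃ ≠ 0)
    (hs₁ : s ≠ ε₁) (hs₂ : s ≠ ε₂) (hs₃ : s ≠ ε₃) (hst : s ≠ t) :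
    curvature ε₁ ε₂ ε₃ s t
      = (tangentDistSq ε₁ ε₂ ε₃ s t - ε₁) * (tangentDistSq ε₁ ε₂ ε₃ s t - ε₂)
          * (tangentDistSq ε₁ ε₂ ε₃ s t - ε₃)
        / (tangentDistSq ε₁ ε₂ ε₃ s t * (s - ε₁) * (s - ε₂) * (s - ε₃)) := by
  by_cases hD : tangentDenom ε₁ ε₂ ε₃ s t = 0
  · simp [curvature, tangentDistSq, hD]
  have hD₂ : tangentDenom ε₂ ε₁ ε₃ s t ≠ 0 := tangentDenom_swap₁₂ ε₁ ε₂ ε₃ s t ▸ hD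
  have hD₃ : tangentDenom ε₃ ε₂ ε₁ s t ≠ 0 := tangentDenom_swap₁₃ ε₁ ε₂ ε₃ s t ▸ hD
  have hα₂ := tangentDistSq_sub hD₂
  have hα₃ := tangentDistSq_sub hD₃
  rw [tangentDistSq_swap₁₂, tangentDenom_swap₁₂] at hα₂
  rw [tangentDistSq_swap₁₃, tangentDenom_swap₁₃] at hα₃
  rw [tangentDistSq_sub hD, hα₂, hα₃, curvature, tangentDistSq]
  have := sub_ne_zero.2 hs₁
  have := sub_ne_zero.2 hs₂
  have := sub_ne_zero.2 hs₃
  have := sub_ne_zero.2 hst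
  have := sub_ne_zero.2 hst.symm
  field_simp
  ring

end Fresnel

/-- The Gaussian curvature of the Fresnel surface in Darboux coordinates, expressed via
the squared distance `α(s,t)` of the origin to the tangent plane. -/
theorem stmt8 (ε₁ ε₂ ε₃ s t : ℝ) (h₀ : 0 < ε₁) (h₁₂ : ε₁ < ε₂) (h₂₃ : ε₂ < ε₃)
    (hst : (ε₁ < s ∧ s < ε₂ ∧ ε₂ < t ∧ t < ε₃)
      ∨ (ε₁ < t ∧ t < ε₂ ∧ ε₂ < s ∧ s < ε₃)) :
    let α : ℝ := (t - s) * ε₁ * ε₂ * ε₃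
      / (s ^ 2 * t - (ε₁ + ε₂ + ε₃) * s * t + (ε₁ * ε₂ + ε₁ * ε₃ + ε₂ * ε₃) * t
          - ε₁ * ε₂ * ε₃)
    let K : ℝ := (s * t - (ε₁ + ε₂) * t + ε₁ * ε₂) * (s * t - (ε₁ + ε₃) * t + ε₁ * ε₃)
      * (s * t - (ε₂ + ε₃) * t + ε₂ * ε₃)
      / ((s - t) * (s ^ 2 * t - (ε₁ + ε₂ + ε₃) * s * t
          + (ε₁ * ε₂ + ε₁ * ε₃ + ε₂ * ε₃) * t - ε₁ * ε₂ * ε₃) ^ 2)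
    K = (α - ε₁) * (α - ε₂) * (α - ε₃) / (α * (s - ε₁) * (s - ε₂) * (s - ε₃)) := by
  obtain ⟨hs₁, hs₂, hs₃, hst'⟩ : s ≠ ε₁ ∧ s ≠ ε₂ ∧ s ≠ ε₃ ∧ s ≠ t := by
    rcases hst with h | h <;> refine ⟨?_, ?_, ?_, ?_⟩ <;> intro <;> linarith
  exact Fresnel.curvature_eq h₀.ne' (by linarith) (by linarith) hs₁ hs₂ hs₃ hst'
end

section
/- Let 0<ε₁<ε₂<ε₃ and α(s,t) = (t−s)ε₁ε₂ε₃/(s²t−(ε₁+ε₂+ε₃)st+(ε₁ε₂+ε₁ε₃+ε₂ε₃)t−ε₁ε₂ε₃). Then α(s,t) = ε₂ if and only if t = ε₁ε₃/(ε₁+ε₃−s) (for s,t in the Darboux parameter region where the denominator is nonzero). Consequently the Gaussian curvature K(s,t) of the Fresnel surface vanishes exactly along the curve t = T(s) := ε₁ε₃/(ε₁+ε₃−s) (the Hamiltonian circle). -/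
/-- On the outer sheet of the Fresnel surface, `α(s,t) = ε₂` if and only if
`t = T(s) = ε₁ε₃/(ε₁+ε₃-s)`, and consequently the Gaussian curvature `K(s,t)` vanishes
exactly along the Hamiltonian circle `t = T(s)`. -/
theorem stmt9 (ε₁ ε₂ ε₃ s t : ℝ) (h₀ : 0 < ε₁) (h₁₂ : ε₁ < ε₂) (h₂₃ : ε₂ < ε₃)
    (hst : ε₁ < t ∧ t < ε₂ ∧ ε₂ < s ∧ s < ε₃) :
    let α : ℝ := (t - s) * ε₁ * ε₂ * ε₃
      / (s ^ 2 * t - (ε₁ + ε₂ + ε₃) * s * t + (ε₁ * ε₂ + ε₁ * ε₃ + ε₂ * ε₃) * t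
          - ε₁ * ε₂ * ε₃)
    let K : ℝ := (s * t - (ε₁ + ε₂) * t + ε₁ * ε₂) * (s * t - (ε₁ + ε₃) * t + ε₁ * ε₃)
      * (s * t - (ε₂ + ε₃) * t + ε₂ * ε₃)
      / ((s - t) * (s ^ 2 * t - (ε₁ + ε₂ + ε₃) * s * t
          + (ε₁ * ε₂ + ε₁ * ε₃ + ε₂ * ε₃) * t - ε₁ * ε₂ * ε₃) ^ 2)
    (α = ε₂ ↔ t = ε₁ * ε₃ / (ε₁ + ε₃ - s)) ∧
    (K = 0 ↔ t = ε₁ * ε₃ / (ε₁ + ε₃ - s)) := by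
  obtain ⟨h1, h2, h3, h4⟩ := hst
  intro α K
  have ht0 : 0 < t := lt_trans h₀ h1
  have hs3 : 0 < ε₁ + ε₃ - s := by linarith
  -- the denominator D is negative
  have hD : s ^ 2 * t - (ε₁ + ε₂ + ε₃) * s * t + (ε₁ * ε₂ + ε₁ * ε₃ + ε₂ * ε₃) * t
      - ε₁ * ε₂ * ε₃ < 0 := by
    have hA : s ^ 2 * t - (ε₁ + ε₂ + ε₃) * s * t + (ε₁ * ε₂ + ε₁ * ε₃ + ε₂ * ε₃) * t
        - ε₁ * ε₂ * ε₃
        = t * (s ^ 2 - (ε₁ + ε₂ + ε₃) * s + (ε₁ * ε₂ + ε₁ * ε₃ + ε₂ * ε₃)) - ε₁ * ε₂ * ε₃ := by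
      ring
    rw [hA]
    rcases le_or_gt (s ^ 2 - (ε₁ + ε₂ + ε₃) * s + (ε₁ * ε₂ + ε₁ * ε₃ + ε₂ * ε₃)) 0 with hA0 | hA0
    · nlinarith [mul_pos h₀ (mul_pos (lt_trans h₀ h₁₂) (lt_trans (lt_trans h₀ h₁₂) h₂₃))]
    · have key : ε₂ * (s ^ 2 - (ε₁ + ε₂ + ε₃) * s + (ε₁ * ε₂ + ε₁ * ε₃ + ε₂ * ε₃))
          - ε₁ * ε₂ * ε₃ = ε₂ * ((s - ε₂) * (s - ε₁ - ε₃)) := by ring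
      nlinarith [mul_pos (sub_pos.2 h3) hs3, mul_pos (lt_trans h₀ h₁₂)
        (mul_pos (sub_pos.2 h3) hs3), mul_lt_mul_of_pos_right h2 hA0]
  have hDne : s ^ 2 * t - (ε₁ + ε₂ + ε₃) * s * t + (ε₁ * ε₂ + ε₁ * ε₃ + ε₂ * ε₃) * t
      - ε₁ * ε₂ * ε₃ ≠ 0 := ne_of_lt hD
  -- the target condition is equivalent to M = 0 where M = t(ε₁+ε₃-s) - ε₁ε₃
  have hT : (t = ε₁ * ε₃ / (ε₁ + ε₃ - s)) ↔ t * (ε₁ + ε₃ - s) - ε₁ * ε₃ = 0 := by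
    rw [eq_div_iff (ne_of_gt hs3)]
    constructor <;> intro h <;> linarith
  have halpha : α = ε₂ ↔ t * (ε₁ + ε₃ - s) - ε₁ * ε₃ = 0 := by
    show (t - s) * ε₁ * ε₂ * ε₃ / _ = ε₂ ↔ _
    rw [div_eq_iff hDne]
    constructor
    · intro h
      have key : ε₂ * (s - ε₂) * (t * (ε₁ + ε₃ - s) - ε₁ * ε₃) = 0 := by
        linear_combination h
      rcases mul_eq_zero.1 key with h' | h'
      · rcases mul_eq_zero.1 h' with h'' | h''
        · linarith [lt_trans h₀ h₁₂]
        · linarith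
      · exact h'
    · intro h
      linear_combination (ε₂ * (s - ε₂)) * h
  constructor
  · exact halpha.trans hT.symm
  · rw [hT]
    show _ / _ = 0 ↔ _
    have hden : (s - t) * (s ^ 2 * t - (ε₁ + ε₂ + ε₃) * s * t
        + (ε₁ * ε₂ + ε₁ * ε₃ + ε₂ * ε₃) * t - ε₁ * ε₂ * ε₃) ^ 2 ≠ 0 := by
      apply mul_ne_zero
      · exact (sub_pos.2 (lt_trans h2 h3)).ne'
      · exact pow_ne_zero _ hDne
    rw [div_eq_zero_iff]
    have hP1 : 0 < s * t - (ε₁ + ε₂) * t + ε₁ * ε₂ := by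
      nlinarith [mul_pos ht0 (sub_pos.2 h3), mul_pos h₀ (sub_pos.2 h2)]
    have hP3 : 0 < s * t - (ε₂ + ε₃) * t + ε₂ * ε₃ := by
      nlinarith [mul_pos (sub_pos.2 h2) (sub_pos.2 h4),
        mul_pos (lt_trans h₀ h₁₂) (sub_pos.2 (lt_trans h2 h3))]
    constructor
    · rintro (h | h)
      · rcases mul_eq_zero.1 h with h' | h'
        · rcases mul_eq_zero.1 h' with h'' | h''
          · linarith
          · linarith
        · linarith
      · exact absurd h hden
    · intro h
      left
      have : s * t - (ε₁ + ε₃) * t + ε₁ * ε₃ = 0 := by linarith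
      rw [this, mul_zero, zero_mul]
end

section
/- Let 0<ε₁<ε₂<ε₃ and consider the Hamiltonian circle parametrized by s ↦ Φ(s, T(s)) with T(s) = ε₁ε₃/(ε₁+ε₃−s). Then the tangent vector dΦ/ds = ∂ₛΦ + T'(s)∂ₜΦ lies in the kernel of the second fundamental form of the Fresnel surface at Φ(s,T(s)): II(1, T'(s)) = L(s,T(s)) + 2M(s,T(s))T'(s) + N(s,T(s))T'(s)² = 0, where T'(s) = ε₁ε₃/(ε₁+ε₃−s)², L = m P_L/(4t(s−ε₁)(s−ε₂)(s−ε₃)), M = m/(4t), N = m P_N/(4t²(t−ε₁)(t−ε₂)(t−ε₃)) with P_L(s,t) = s²t−2st²+(ε₁+ε₂+ε₃)t²−(ε₁ε₂+ε₁ε₃+ε₂ε₃)t+ε₁ε₂ε₃ and P_N(s,t) = −s²t²+(ε₁+ε₂+ε₃)st²−(ε₁ε₂+ε₁ε₃+ε₂ε₃)t²+ε₁ε₂ε₃(2t−s). -/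
/-!
On the hyperbola `t (ε₁ + ε₃ - s) = ε₁ ε₃` traced by the Hamiltonian circle, the two cubic
numerators factor through the denominators they are divided by:
`ε₁ ε₃ PL = -t² (s - ε₁)(s - ε₂)(s - ε₃)` and `t PN = -ε₁ ε₃ (t - ε₁)(t - ε₂)(t - ε₃)`.
Since moreover `T' = t² / (ε₁ ε₃)`, the three terms of `II(1, T')` reduce to
`-m t / (4 ε₁ ε₃)`, `2 m t / (4 ε₁ ε₃)` and `-m t / (4 ε₁ ε₃)`, which cancel.
-/

namespace Fresnel

variable {K : Type*}

def PL [CommRing K] (ε₁ ε₂ ε₃ s t : K) : K :=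
  s ^ 2 * t - 2 * s * t ^ 2 + (ε₁ + ε₂ + ε₃) * t ^ 2
    - (ε₁ * ε₂ + ε₁ * ε₃ + ε₂ * ε₃) * t + ε₁ * ε₂ * ε₃

def PN [CommRing K] (ε₁ ε₂ ε₃ s t : K) : K :=
  -s ^ 2 * t ^ 2 + (ε₁ + ε₂ + ε₃) * s * t ^ 2
    - (ε₁ * ε₂ + ε₁ * ε₃ + ε₂ * ε₃) * t ^ 2 + ε₁ * ε₂ * ε₃ * (2 * t - s)

section CommRing

variable [CommRing K] {ε₁ ε₂ ε₃ s t : K}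

theorem mul_PL_of_hyperbola (h : t * (ε₁ + ε₃ - s) = ε₁ * ε₃) :
    ε₁ * ε₃ * PL ε₁ ε₂ ε₃ s t = -t ^ 2 * ((s - ε₁) * (s - ε₂) * (s - ε₃)) := by
  unfold PL
  linear_combination (ε₁ * ε₃ * (t - ε₂) - s * t * (s - ε₂)) * h

theorem mul_PN_of_hyperbola (h : t * (ε₁ + ε₃ - s) = ε₁ * ε₃) :
    t * PN ε₁ ε₂ ε₃ s t = -ε₁ * ε₃ * ((t - ε₁) * (t - ε₂) * (t - ε₃)) := by
  unfold PN
  linear_combination (t ^ 2 * (s - ε₂) - ε₁ * ε₃ * (t - ε₂)) * h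

theorem eps₃_mul_sub_eps₁_of_hyperbola (h : t * (ε₁ + ε₃ - s) = ε₁ * ε₃) :
    ε₃ * (t - ε₁) = t * (s - ε₁) := by
  linear_combination h

theorem eps₁_mul_sub_eps₃_of_hyperbola (h : t * (ε₁ + ε₃ - s) = ε₁ * ε₃) :
    ε₁ * (t - ε₃) = t * (s - ε₃) := by
  linear_combination h

end CommRing

section Field

variable [Field K] [CharZero K] {ε₁ ε₂ ε₃ s t : K}

theorem secondFundamentalForm_tangent_eq_zero (m : K) (hε₁ : ε₁ ≠ 0) (hε₃ : ε₃ ≠ 0)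
    (hs₁ : s ≠ ε₁) (hs₂ : s ≠ ε₂) (hs₃ : s ≠ ε₃) (ht₂ : t ≠ ε₂)
    (h : t * (ε₁ + ε₃ - s) = ε₁ * ε₃) :
    m * PL ε₁ ε₂ ε₃ s t / (4 * t * (s - ε₁) * (s - ε₂) * (s - ε₃))
      + 2 * (m / (4 * t)) * (t ^ 2 / (ε₁ * ε₃))
      + m * PN ε₁ ε₂ ε₃ s t / (4 * t ^ 2 * (t - ε₁) * (t - ε₂) * (t - ε₃))
        * (t ^ 2 / (ε₁ * ε₃)) ^ 2 = 0 := by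
  have ht : t ≠ 0 := by
    rintro rfl
    exact mul_ne_zero hε₁ hε₃ (by simpa using h.symm)
  have ht₁ : t ≠ ε₁ := fun h₀ ↦ mul_ne_zero ht (sub_ne_zero.2 hs₁) <| by
    rw [← eps₃_mul_sub_eps₁_of_hyperbola h, h₀, sub_self, mul_zero]
  have ht₃ : t ≠ ε₃ := fun h₀ ↦ mul_ne_zero ht (sub_ne_zero.2 hs₃) <| by
    rw [← eps₁_mul_sub_eps₃_of_hyperbola h, h₀, sub_self, mul_zero]
  have hε : ε₁ * ε₃ ≠ 0 := mul_ne_zero hε₁ hε₃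
  have hL : m * PL ε₁ ε₂ ε₃ s t / (4 * t * (s - ε₁) * (s - ε₂) * (s - ε₃))
      = -(m * t) / (4 * (ε₁ * ε₃)) := by
    rw [div_eq_div_iff (by simp [mul_assoc, sub_eq_zero, *]) (by simp [*])]
    linear_combination 4 * m * mul_PL_of_hyperbola (ε₂ := ε₂) h
  have hN : m * PN ε₁ ε₂ ε₃ s t / (4 * t ^ 2 * (t - ε₁) * (t - ε₂) * (t - ε₃))
      * (t ^ 2 / (ε₁ * ε₃)) ^ 2 = -(m * t) / (4 * (ε₁ * ε₃)) := by
    rw [div_pow, div_mul_div_comm,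
      div_eq_div_iff (by simp [mul_assoc, sub_eq_zero, *]) (by simp [*])]
    linear_combination 4 * m * t ^ 3 * ε₁ * ε₃ * mul_PN_of_hyperbola (ε₂ := ε₂) h
  rw [hL, hN]
  field_simp
  ring

end Field

end Fresnel

theorem stmt10_general (ε₁ ε₂ ε₃ s m : ℝ) (h₀ : 0 < ε₁) (h₁₂ : ε₁ < ε₂)
    (hs : ε₂ < s ∧ s < ε₃)
    (ht₂ : ε₁ * ε₃ / (ε₁ + ε₃ - s) ≠ ε₂) :
    let t : ℝ := ε₁ * ε₃ / (ε₁ + ε₃ - s)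
    let T' : ℝ := ε₁ * ε₃ / (ε₁ + ε₃ - s) ^ 2
    let PL : ℝ := s ^ 2 * t - 2 * s * t ^ 2 + (ε₁ + ε₂ + ε₃) * t ^ 2
      - (ε₁ * ε₂ + ε₁ * ε₃ + ε₂ * ε₃) * t + ε₁ * ε₂ * ε₃
    let PN : ℝ := -s ^ 2 * t ^ 2 + (ε₁ + ε₂ + ε₃) * s * t ^ 2
      - (ε₁ * ε₂ + ε₁ * ε₃ + ε₂ * ε₃) * t ^ 2 + ε₁ * ε₂ * ε₃ * (2 * t - s)
    let L : ℝ := m * PL / (4 * t * (s - ε₁) * (s - ε₂) * (s - ε₃))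
    let M : ℝ := m / (4 * t)
    let N : ℝ := m * PN / (4 * t ^ 2 * (t - ε₁) * (t - ε₂) * (t - ε₃))
    L + 2 * M * T' + N * T' ^ 2 = 0 := by
  intro t T' PL PN L M N
  obtain ⟨hs₂, hs₃⟩ := hs
  have hd : ε₁ + ε₃ - s ≠ 0 := by linarith
  have hε₁ : ε₁ ≠ 0 := h₀.ne'
  have hε₃ : ε₃ ≠ 0 := by linarith
  have hT' : T' = t ^ 2 / (ε₁ * ε₃) := by
    simp only [T', t]
    field_simp
  rw [hT']
  exact Fresnel.secondFundamentalForm_tangent_eq_zero m hε₁ hε₃ (by linarith) hs₂.ne'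
    hs₃.ne ht₂ (div_mul_cancel₀ _ hd)

/-- Along the Hamiltonian circle `t = T(s)` the tangent vector `∂ₛΦ + T'(s)∂ₜΦ` lies in
the kernel of the second fundamental form: `L + 2M T'(s) + N T'(s)² = 0`. -/
theorem stmt10 (ε₁ ε₂ ε₃ s m : ℝ) (h₀ : 0 < ε₁) (h₁₂ : ε₁ < ε₂) (h₂₃ : ε₂ < ε₃)
    (hs : ε₂ < s ∧ s < ε₃) (hm : 0 < m)
    (ht₂ : ε₁ * ε₃ / (ε₁ + ε₃ - s) ≠ ε₂) :
    let t : ℝ := ε₁ * ε₃ / (ε₁ + ε₃ - s)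
    let T' : ℝ := ε₁ * ε₃ / (ε₁ + ε₃ - s) ^ 2
    let PL : ℝ := s ^ 2 * t - 2 * s * t ^ 2 + (ε₁ + ε₂ + ε₃) * t ^ 2
      - (ε₁ * ε₂ + ε₁ * ε₃ + ε₂ * ε₃) * t + ε₁ * ε₂ * ε₃
    let PN : ℝ := -s ^ 2 * t ^ 2 + (ε₁ + ε₂ + ε₃) * s * t ^ 2
      - (ε₁ * ε₂ + ε₁ * ε₃ + ε₂ * ε₃) * t ^ 2 + ε₁ * ε₂ * ε₃ * (2 * t - s)
    let L : ℝ := m * PL / (4 * t * (s - ε₁) * (s - ε₂) * (s - ε₃))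
    let M : ℝ := m / (4 * t)
    let N : ℝ := m * PN / (4 * t ^ 2 * (t - ε₁) * (t - ε₂) * (t - ε₃))
    L + 2 * M * T' + N * T' ^ 2 = 0 :=
  stmt10_general ε₁ ε₂ ε₃ s m h₀ h₁₂ hs ht₂
end

section
/- Let p̃: ℝ^d → ℝ be smooth with p̃(0)=0, ∇p̃(0)=0 and D²p̃(0) = diag(−1,…,−1,1). Then there exists c>0 and functions ψ₁, ψ₂ : B'(0,c) ⊂ ℝ^{d−1} → (0,∞), continuous on B'(0,c) and smooth away from 0, such that all zeros of p̃ in B(0,c) are exactly the points with ξ_d = ψ₁(ξ') or ξ_d = −ψ₂(ξ'); moreover ψᵢ(ξ') = |ξ'| + O(|ξ'|²) as ξ' → 0. -/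
open Metric Set Filter

set_option maxHeartbeats 1000000

section Key

variable {E : Type*} [NormedAddCommGroup E] [InnerProductSpace ℝ E] [CompleteSpace E]

/-- One-sided key lemma: positive zeros of `p` form a graph. -/
theorem key_lemma (p g : E × ℝ → ℝ)
    (hp : ContDiff ℝ (⊤ : ℕ∞) p)
    (hpg : ∀ ξ : E × ℝ, p ξ = ξ.2 ^ 2 - ‖ξ.1‖ ^ 2 + g ξ)
    (C : ℕ → ℝ)
    (hg : ∀ n : ℕ, n ≤ 3 → ∀ ξ : E × ℝ,
      ‖iteratedFDeriv ℝ n g ξ‖ ≤ C n * Real.sqrt (‖ξ.1‖ ^ 2 + ξ.2 ^ 2) ^ (3 - n)) :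
    ∃ c > 0, ∃ ψ : E → ℝ, ∃ C' : ℝ, 0 ≤ C' ∧
      ψ 0 = 0 ∧
      (∀ x : E, ‖x‖ < c → x ≠ 0 → 0 < ψ x) ∧
      ContinuousOn ψ (ball 0 c) ∧
      ContDiffOn ℝ (⊤ : ℕ∞) ψ (ball 0 c \ {0}) ∧
      (∀ ξ : E × ℝ, Real.sqrt (‖ξ.1‖ ^ 2 + ξ.2 ^ 2) < c →
        (p ξ = 0 ∧ 0 ≤ ξ.2 ↔ ξ.2 = ψ ξ.1)) ∧
      (∀ x : E, ‖x‖ < c → |ψ x - ‖x‖| ≤ C' * ‖x‖ ^ 2) := by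
  classical
  set M : ℝ := 1 + |C 0| + |C 1| with hMdef
  have hM1 : (1 : ℝ) ≤ M := by
    have := abs_nonneg (C 0); have := abs_nonneg (C 1); linarith
  have hM0 : (0 : ℝ) < M := by linarith
  have hC0 : C 0 ≤ M := by
    have := abs_nonneg (C 1); have := le_abs_self (C 0); simp only [hMdef]; linarith
  have hC1 : C 1 ≤ M := by
    have := abs_nonneg (C 0); have := le_abs_self (C 1); simp only [hMdef]; linarith
  set ε : ℝ := (100 * M)⁻¹ with hεdef
  have hε : 0 < ε := by positivity
  have hMε : M * ε = 1 / 100 := by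
    field_simp [hεdef]; rw [hεdef]; field_simp
  have hε1 : ε ≤ 1 / 100 := by
    rw [hεdef, show (1:ℝ)/100 = (100)⁻¹ by norm_num]
    apply inv_anti₀ (by norm_num)
    nlinarith
  set c : ℝ := ε / 3 with hcdef
  have hc : 0 < c := by positivity
  have hcε : c ≤ ε := by rw [hcdef]; linarith
  -- basic sqrt facts
  have hsq : ∀ ξ : E × ℝ, Real.sqrt (‖ξ.1‖ ^ 2 + ξ.2 ^ 2) ^ 2 = ‖ξ.1‖ ^ 2 + ξ.2 ^ 2 :=
    fun ξ => Real.sq_sqrt (by positivity)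
  have hsub : ∀ (a b : ℝ), 0 ≤ a → 0 ≤ b → Real.sqrt (a ^ 2 + b ^ 2) ≤ a + b := by
    intro a b ha hb
    rw [show a + b = Real.sqrt ((a + b) ^ 2) by rw [Real.sqrt_sq (by linarith)]]
    apply Real.sqrt_le_sqrt; nlinarith
  -- smoothness of g
  have hgsm : ContDiff ℝ (⊤ : ℕ∞) g := by
    have : g = fun ξ : E × ℝ => p ξ - (ξ.2 ^ 2 - ‖ξ.1‖ ^ 2) := by
      funext ξ; rw [hpg]; ring
    rw [this]
    exact hp.sub ((contDiff_snd.pow 2).sub ((contDiff_norm_sq ℝ).comp contDiff_fst))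
  -- bound on g
  have hg0 : ∀ ξ : E × ℝ, |g ξ| ≤ M * Real.sqrt (‖ξ.1‖ ^ 2 + ξ.2 ^ 2) ^ 3 := by
    intro ξ
    have h := hg 0 (by norm_num) ξ
    rw [norm_iteratedFDeriv_zero] at h
    calc |g ξ| = ‖g ξ‖ := (Real.norm_eq_abs _).symm
      _ ≤ C 0 * Real.sqrt (‖ξ.1‖ ^ 2 + ξ.2 ^ 2) ^ (3 - 0) := h
      _ ≤ M * Real.sqrt (‖ξ.1‖ ^ 2 + ξ.2 ^ 2) ^ 3 := by
          apply mul_le_mul_of_nonneg_right hC0 (by positivity)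
  -- bound on the partial derivative of g in the t direction
  have hg1 : ∀ ξ : E × ℝ, |fderiv ℝ g ξ ((0 : E), (1 : ℝ))| ≤ M * (‖ξ.1‖ ^ 2 + ξ.2 ^ 2) := by
    intro ξ
    have h := hg 1 (by norm_num) ξ
    have hf1 : ‖fderiv ℝ g ξ‖ = ‖iteratedFDeriv ℝ 1 g ξ‖ := by
      rw [← norm_iteratedFDeriv_zero (𝕜 := ℝ) (f := fderiv ℝ g) (x := ξ), norm_iteratedFDeriv_fderiv]
    have hone : ‖((0 : E), (1 : ℝ))‖ = 1 := by
      simp [Prod.norm_def]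
    calc |fderiv ℝ g ξ ((0 : E), (1 : ℝ))| = ‖fderiv ℝ g ξ ((0 : E), (1 : ℝ))‖ :=
          (Real.norm_eq_abs _).symm
      _ ≤ ‖fderiv ℝ g ξ‖ * ‖((0 : E), (1 : ℝ))‖ := (fderiv ℝ g ξ).le_opNorm _
      _ = ‖iteratedFDeriv ℝ 1 g ξ‖ := by rw [hone, hf1, mul_one]
      _ ≤ C 1 * Real.sqrt (‖ξ.1‖ ^ 2 + ξ.2 ^ 2) ^ (3 - 1) := h
      _ ≤ M * (‖ξ.1‖ ^ 2 + ξ.2 ^ 2) := by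
          rw [show (3 - 1 : ℕ) = 2 by norm_num, hsq ξ]
          apply mul_le_mul_of_nonneg_right hC1 (by positivity)
  have hgsmall : ∀ (x : E) (t : ℝ), Real.sqrt (‖x‖ ^ 2 + t ^ 2) ≤ ε →
      |g (x, t)| ≤ (1 / 100) * (‖x‖ ^ 2 + t ^ 2) := by
    intro x t hξ
    set ξ : E × ℝ := (x, t) with hξdef
    show |g ξ| ≤ (1 / 100) * (‖ξ.1‖ ^ 2 + ξ.2 ^ 2)
    have h := hg0 ξ
    have h3 : Real.sqrt (‖ξ.1‖ ^ 2 + ξ.2 ^ 2) ^ 3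
        = Real.sqrt (‖ξ.1‖ ^ 2 + ξ.2 ^ 2) * (‖ξ.1‖ ^ 2 + ξ.2 ^ 2) := by
      rw [show (3 : ℕ) = 1 + 2 by norm_num, pow_add, pow_one, hsq ξ]
    rw [h3] at h
    calc |g ξ| ≤ M * (Real.sqrt (‖ξ.1‖ ^ 2 + ξ.2 ^ 2) * (‖ξ.1‖ ^ 2 + ξ.2 ^ 2)) := h
      _ ≤ M * (ε * (‖ξ.1‖ ^ 2 + ξ.2 ^ 2)) := by
          apply mul_le_mul_of_nonneg_left _ (le_of_lt hM0)
          apply mul_le_mul_of_nonneg_right hξ (by positivity)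
      _ = (1 / 100) * (‖ξ.1‖ ^ 2 + ξ.2 ^ 2) := by rw [← mul_assoc, hMε]
  -- partial derivative in the t-direction
  have hpd : ∀ (x : E) (t : ℝ), HasDerivAt (fun s => p (x, s))
      (2 * t + fderiv ℝ g (x, t) ((0 : E), (1 : ℝ))) t := by
    intro x t
    have hcurve : HasDerivAt (fun s : ℝ => ((x, s) : E × ℝ)) ((0 : E), (1 : ℝ)) t :=
      (hasDerivAt_const t x).prodMk (hasDerivAt_id t)
    have hgp : HasDerivAt (fun s => g (x, s)) (fderiv ℝ g (x, t) ((0 : E), (1 : ℝ))) t :=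
      (hgsm.differentiable (by simp) (x, t)).hasFDerivAt.comp_hasDerivAt t hcurve
    have hq : HasDerivAt (fun s : ℝ => s ^ 2 - ‖x‖ ^ 2) (2 * t) t := by
      simpa using (hasDerivAt_pow 2 t).sub_const (‖x‖ ^ 2)
    have h := hq.add hgp
    have heq : (fun s => p (x, s)) = fun s => (s ^ 2 - ‖x‖ ^ 2) + g (x, s) := by
      funext s; rw [hpg]
    rw [heq]; exact h
  -- sign lemma: positive for t ≥ 2r
  have L1 : ∀ (x : E) (t : ℝ), 2 * ‖x‖ ≤ t → 0 < t →
      Real.sqrt (‖x‖ ^ 2 + t ^ 2) ≤ ε → 0 < p (x, t) := by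
    intro x t ht htpos hn
    have hgb := hgsmall x t hn
    rw [abs_le] at hgb
    have hr : (0 : ℝ) ≤ ‖x‖ := norm_nonneg x
    have hr2 : ‖x‖ ^ 2 ≤ t ^ 2 / 4 := by nlinarith
    rw [hpg]
    show 0 < t ^ 2 - ‖x‖ ^ 2 + g (x, t)
    nlinarith
  -- sign lemma: negative for 0 ≤ t ≤ r/2
  have L2 : ∀ (x : E) (t : ℝ), x ≠ 0 → 0 ≤ t → t ≤ ‖x‖ / 2 →
      Real.sqrt (‖x‖ ^ 2 + t ^ 2) ≤ ε → p (x, t) < 0 := by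
    intro x t hx ht0 ht hn
    have hr : 0 < ‖x‖ := norm_pos_iff.mpr hx
    have hgb := hgsmall x t hn
    rw [abs_le] at hgb
    have ht2 : t ^ 2 ≤ ‖x‖ ^ 2 / 4 := by nlinarith
    rw [hpg]
    show t ^ 2 - ‖x‖ ^ 2 + g (x, t) < 0
    nlinarith
  -- strict monotonicity on [r/2, 2r]
  have Lmono : ∀ x : E, x ≠ 0 → ‖x‖ ≤ ε →
      StrictMonoOn (fun t => p (x, t)) (Icc (‖x‖ / 2) (2 * ‖x‖)) := by
    intro x hx hxε
    have hr : 0 < ‖x‖ := norm_pos_iff.mpr hx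
    apply strictMonoOn_of_deriv_pos (convex_Icc _ _)
    · exact (hp.continuous.comp (continuous_const.prodMk continuous_id)).continuousOn
    · intro t ht
      rw [interior_Icc] at ht
      rw [(hpd x t).deriv]
      have hd := hg1 (x, t)
      rw [abs_le] at hd
      have hd1 : -(M * (‖x‖ ^ 2 + t ^ 2)) ≤ fderiv ℝ g (x, t) ((0 : E), (1 : ℝ)) := hd.1
      have h5 : ‖x‖ ^ 2 + t ^ 2 ≤ 5 * ‖x‖ ^ 2 := by nlinarith [ht.1, ht.2]
      have hMr : M * ‖x‖ ≤ 1 / 100 := by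
        calc M * ‖x‖ ≤ M * ε := by
              apply mul_le_mul_of_nonneg_left hxε (le_of_lt hM0)
          _ = 1 / 100 := hMε
      nlinarith [ht.1, ht.2, hd1, mul_le_mul_of_nonneg_right hMr (le_of_lt hr)]
  -- the function ψ
  set ψ : E → ℝ := fun x =>
    if h : ∃ t, t ∈ Icc (‖x‖ / 2) (2 * ‖x‖) ∧ p (x, t) = 0 then h.choose else 0 with hψdef
  -- sqrt bound on the strip
  have hstrip : ∀ (x : E) (t : ℝ), 0 ≤ t → t ≤ 2 * ‖x‖ → ‖x‖ < c →
      Real.sqrt (‖x‖ ^ 2 + t ^ 2) ≤ ε ∧ Real.sqrt (‖x‖ ^ 2 + t ^ 2) < ε := by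
    intro x t ht0 ht hx
    have h1 : Real.sqrt (‖x‖ ^ 2 + t ^ 2) ≤ ‖x‖ + t := hsub _ _ (norm_nonneg x) ht0
    have h2 : ‖x‖ + t < ε := by
      rw [hcdef] at hx; linarith [norm_nonneg x]
    exact ⟨by linarith, by linarith⟩
  -- existence and basic properties of ψ
  have hψ : ∀ x : E, ‖x‖ < c → ψ x ∈ Icc (‖x‖ / 2) (2 * ‖x‖) ∧ p (x, ψ x) = 0 := by
    intro x hx
    have hex : ∃ t, t ∈ Icc (‖x‖ / 2) (2 * ‖x‖) ∧ p (x, t) = 0 := by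
      rcases eq_or_ne x 0 with rfl | hx0
      · refine ⟨0, by simp, ?_⟩
        have hgz := hg0 ((0 : E), (0 : ℝ))
        simp only [norm_zero] at hgz
        norm_num at hgz
        rw [hpg]
        simpa using hgz
      · have hr : 0 < ‖x‖ := norm_pos_iff.mpr hx0
        have hle : ‖x‖ / 2 ≤ 2 * ‖x‖ := by linarith
        have hcont : ContinuousOn (fun t => p (x, t)) (Icc (‖x‖ / 2) (2 * ‖x‖)) :=
          (hp.continuous.comp (continuous_const.prodMk continuous_id)).continuousOn
        have hneg : p (x, ‖x‖ / 2) < 0 :=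
          L2 x (‖x‖ / 2) hx0 (by linarith) le_rfl
            (hstrip x (‖x‖ / 2) (by linarith) (by linarith) hx).1
        have hpos : 0 < p (x, 2 * ‖x‖) :=
          L1 x (2 * ‖x‖) le_rfl (by linarith)
            (hstrip x (2 * ‖x‖) (by linarith) le_rfl hx).1
        have h0 : (0 : ℝ) ∈ Icc (p (x, ‖x‖ / 2)) (p (x, 2 * ‖x‖)) :=
          ⟨le_of_lt hneg, le_of_lt hpos⟩
        obtain ⟨t, htmem, htz⟩ := intermediate_value_Icc hle hcont h0
        exact ⟨t, htmem, htz⟩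
    rw [hψdef]
    simp only [dif_pos hex]
    exact hex.choose_spec
  have hψ0 : ψ 0 = 0 := by
    have := (hψ 0 (by simpa using hc)).1
    simp only [norm_zero] at this
    norm_num at this
    exact this
  -- uniqueness of positive zeros
  have huniq : ∀ (x : E) (t : ℝ), ‖x‖ < c → 0 < t →
      Real.sqrt (‖x‖ ^ 2 + t ^ 2) ≤ ε → p (x, t) = 0 → t = ψ x := by
    intro x t hx htpos hn hz
    rcases eq_or_ne x 0 with rfl | hx0
    · exact absurd hz (ne_of_gt (L1 0 t (by simp [htpos.le]) htpos (by simpa using hn)))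
    · have hr : 0 < ‖x‖ := norm_pos_iff.mpr hx0
      obtain ⟨hψmem, hψz⟩ := hψ x hx
      have ht1 : ‖x‖ / 2 < t := by
        by_contra h
        push_neg at h
        exact absurd hz (ne_of_lt (L2 x t hx0 htpos.le h hn))
      have ht2 : t < 2 * ‖x‖ := by
        by_contra h
        push_neg at h
        exact absurd hz (ne_of_gt (L1 x t h htpos hn))
      exact (Lmono x hx0 (le_trans (le_of_lt hx) hcε)).injOn ⟨ht1.le, ht2.le⟩ hψmem
        (hz.trans hψz.symm)
  -- positivity
  have hψpos : ∀ x : E, ‖x‖ < c → x ≠ 0 → 0 < ψ x := by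
    intro x hx hx0
    have hr : 0 < ‖x‖ := norm_pos_iff.mpr hx0
    have := (hψ x hx).1.1
    linarith
  -- quantitative bound
  have hψbound : ∀ x : E, ‖x‖ < c → |ψ x - ‖x‖| ≤ 27 * M * ‖x‖ ^ 2 := by
    intro x hx
    rcases eq_or_ne x 0 with rfl | hx0
    · simp [hψ0]
    · have hr : 0 < ‖x‖ := norm_pos_iff.mpr hx0
      obtain ⟨⟨hm1, hm2⟩, hz⟩ := hψ x hx
      have hψnn : 0 ≤ ψ x := by linarith
      have hgb : |g (x, ψ x)| ≤ 27 * M * ‖x‖ ^ 3 := by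
        have h := hg0 (x, ψ x)
        have hs : Real.sqrt (‖x‖ ^ 2 + ψ x ^ 2) ≤ 3 * ‖x‖ := by
          have := hsub ‖x‖ (ψ x) (norm_nonneg x) hψnn
          linarith
        calc |g (x, ψ x)| ≤ M * Real.sqrt (‖(x, ψ x).1‖ ^ 2 + (x, ψ x).2 ^ 2) ^ 3 := h
          _ ≤ M * (3 * ‖x‖) ^ 3 := by
              apply mul_le_mul_of_nonneg_left _ (le_of_lt hM0)
              exact pow_le_pow_left₀ (Real.sqrt_nonneg _) hs 3
          _ = 27 * M * ‖x‖ ^ 3 := by ring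
      have heq : ψ x ^ 2 - ‖x‖ ^ 2 + g (x, ψ x) = 0 := by
        rw [← hpg (x, ψ x)]; exact hz
      have hposs : 0 < ψ x + ‖x‖ := by linarith
      have hprod : (ψ x - ‖x‖) * (ψ x + ‖x‖) = -g (x, ψ x) := by linear_combination heq
      have h1 : |ψ x - ‖x‖| * (ψ x + ‖x‖) = |g (x, ψ x)| := by
        rw [← abs_of_pos hposs, ← abs_mul, hprod, abs_neg]
      have h2 : |ψ x - ‖x‖| * (ψ x + ‖x‖) ≤ (27 * M * ‖x‖ ^ 2) * (ψ x + ‖x‖) := by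
        rw [h1]
        calc |g (x, ψ x)| ≤ 27 * M * ‖x‖ ^ 3 := hgb
          _ = (27 * M * ‖x‖ ^ 2) * ‖x‖ := by ring
          _ ≤ (27 * M * ‖x‖ ^ 2) * (ψ x + ‖x‖) := by
              apply mul_le_mul_of_nonneg_left (by linarith) (by positivity)
      exact le_of_mul_le_mul_right h2 hposs
  -- the characterization of nonnegative zeros
  have hiff : ∀ ξ : E × ℝ, Real.sqrt (‖ξ.1‖ ^ 2 + ξ.2 ^ 2) < c →
      (p ξ = 0 ∧ 0 ≤ ξ.2 ↔ ξ.2 = ψ ξ.1) := by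
    rintro ⟨x, t⟩ hn
    simp only at hn ⊢
    have hxc : ‖x‖ < c := by
      have h1 := Real.sqrt_le_sqrt (show ‖x‖ ^ 2 ≤ ‖x‖ ^ 2 + t ^ 2 by nlinarith)
      rw [Real.sqrt_sq (norm_nonneg x)] at h1
      linarith
    constructor
    · rintro ⟨hz, ht0⟩
      rcases eq_or_lt_of_le ht0 with rfl | htpos
      · -- t = 0
        rcases eq_or_ne x 0 with rfl | hx0
        · exact hψ0.symm
        · exact absurd hz (ne_of_lt (L2 x 0 hx0 le_rfl
            (by positivity) (le_trans (le_of_lt hn) hcε)))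
      · exact huniq x t hxc htpos (le_trans (le_of_lt hn) hcε) hz
    · rintro rfl
      obtain ⟨⟨hm1, _⟩, hz⟩ := hψ x hxc
      exact ⟨hz, by linarith [norm_nonneg x, hm1]⟩
  -- smoothness away from the origin
  have hsmooth : ∀ x₀ : E, ‖x₀‖ < c → x₀ ≠ 0 → ContDiffAt ℝ (⊤ : ℕ∞) ψ x₀ := by
    intro x₀ hx₀ hx₀0
    have hr₀ : 0 < ‖x₀‖ := norm_pos_iff.mpr hx₀0
    obtain ⟨⟨hm1, hm2⟩, hz₀⟩ := hψ x₀ hx₀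
    set t₀ : ℝ := ψ x₀ with ht₀def
    have ht₀pos : 0 < t₀ := hψpos x₀ hx₀ hx₀0
    set ξ₀ : E × ℝ := (x₀, t₀) with hξ₀def
    -- the partial derivative is nonzero at ξ₀
    set k : ℝ := 2 * t₀ + fderiv ℝ g ξ₀ ((0 : E), (1 : ℝ)) with hkdef
    have hkpos : 0 < k := by
      have hd := hg1 ξ₀
      rw [abs_le] at hd
      have hd1 : -(M * (‖x₀‖ ^ 2 + t₀ ^ 2)) ≤ fderiv ℝ g ξ₀ ((0 : E), (1 : ℝ)) := hd.1
      have h5 : ‖x₀‖ ^ 2 + t₀ ^ 2 ≤ 5 * ‖x₀‖ ^ 2 := by nlinarith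
      have hMr : M * ‖x₀‖ ≤ 1 / 100 := by
        calc M * ‖x₀‖ ≤ M * ε := by
              apply mul_le_mul_of_nonneg_left (le_trans hx₀.le hcε) (le_of_lt hM0)
          _ = 1 / 100 := hMε
      rw [hkdef]
      nlinarith [mul_le_mul_of_nonneg_right hMr (le_of_lt hr₀)]
    -- derivative of p at ξ₀, and the map F
    set φ : (E × ℝ) →L[ℝ] ℝ := fderiv ℝ p ξ₀ with hφdef
    have hφ1 : φ ((0 : E), (1 : ℝ)) = k := by
      have hcurve : HasDerivAt (fun s : ℝ => ((x₀, s) : E × ℝ)) ((0 : E), (1 : ℝ)) t₀ :=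
        (hasDerivAt_const t₀ x₀).prodMk (hasDerivAt_id t₀)
      have h1 : HasDerivAt (fun s => p (x₀, s)) (φ ((0 : E), (1 : ℝ))) t₀ :=
        ((hp.differentiable (by simp) ξ₀).hasFDerivAt.comp_hasDerivAt t₀ hcurve)
      exact h1.unique (hpd x₀ t₀)
    have hφdecomp : ∀ z : E × ℝ, φ z = φ (z.1, 0) + z.2 * k := by
      intro z
      have hsplit : z = ((z.1, (0 : ℝ)) : E × ℝ) + z.2 • (((0 : E), (1 : ℝ)) : E × ℝ) := by
        ext <;> simp
      rw [← hφ1]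
      conv_lhs => rw [hsplit]
      rw [map_add, map_smul, smul_eq_mul]
    -- the continuous linear equivalence
    set f₁ : (E × ℝ) →L[ℝ] (E × ℝ) := (ContinuousLinearMap.fst ℝ E ℝ).prod φ with hf₁def
    set f₂ : (E × ℝ) →L[ℝ] (E × ℝ) := (ContinuousLinearMap.fst ℝ E ℝ).prod
      (k⁻¹ • ((ContinuousLinearMap.snd ℝ E ℝ) -
        φ.comp ((ContinuousLinearMap.inl ℝ E ℝ).comp (ContinuousLinearMap.fst ℝ E ℝ)))) with hf₂def
    have hf₁app : ∀ z : E × ℝ, f₁ z = (z.1, φ z) := fun z => rfl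
    have hf₂app : ∀ z : E × ℝ, f₂ z = (z.1, k⁻¹ * (z.2 - φ (z.1, 0))) := fun z => rfl
    have hleft : Function.LeftInverse f₂ f₁ := by
      intro z
      rw [hf₁app, hf₂app]
      ext
      · rfl
      · show k⁻¹ * (φ z - φ (z.1, 0)) = z.2
        rw [hφdecomp z]
        field_simp
        ring
    have hright : Function.RightInverse f₂ f₁ := by
      intro z
      rw [hf₂app, hf₁app]
      ext
      · rfl
      · show φ (z.1, k⁻¹ * (z.2 - φ (z.1, 0))) = z.2
        rw [hφdecomp (z.1, k⁻¹ * (z.2 - φ (z.1, 0)))]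
        simp only
        field_simp
        ring
    set A : (E × ℝ) ≃L[ℝ] (E × ℝ) := ContinuousLinearEquiv.equivOfInverse f₁ f₂ hleft hright
      with hAdef
    -- the map F and its local inverse
    set F : E × ℝ → E × ℝ := fun ξ => (ξ.1, p ξ) with hFdef
    have hFc : ContDiffAt ℝ (⊤ : ℕ∞) F ξ₀ := (contDiff_fst.prodMk hp).contDiffAt
    have hFd : HasFDerivAt F (A : (E × ℝ) →L[ℝ] (E × ℝ)) ξ₀ := by
      have : HasFDerivAt F f₁ ξ₀ :=
        (hasFDerivAt_fst).prodMk (hp.differentiable (by simp) ξ₀).hasFDerivAt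
      exact this
    have hFa : F ξ₀ = (x₀, (0 : ℝ)) := by
      rw [hFdef]
      simp only
      rw [hz₀]
    set G : E × ℝ → E × ℝ := hFc.localInverse hFd (by simp) with hGdef
    have hGsmooth : ContDiffAt ℝ (⊤ : ℕ∞) G (F ξ₀) := hFc.to_localInverse hFd (by simp)
    have hGF : G (F ξ₀) = ξ₀ := hFc.localInverse_apply_image hFd (by simp)
    have hri : ∀ᶠ y in nhds (F ξ₀), F (G y) = y :=
      (hFc.hasStrictFDerivAt' hFd (by simp)).eventually_right_inverse
    -- pull back along x ↦ (x, 0)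
    have hu : Filter.Tendsto (fun x : E => ((x, (0 : ℝ)) : E × ℝ)) (nhds x₀) (nhds (F ξ₀)) := by
      rw [hFa]
      exact (continuous_id.prodMk continuous_const).continuousAt
    have hGc : Filter.Tendsto (fun x : E => (G (x, 0)).2) (nhds x₀) (nhds t₀) := by
      have h1 : Filter.Tendsto G (nhds (F ξ₀)) (nhds ξ₀) := by
        have h2 := hGsmooth.continuousAt
        rwa [ContinuousAt, hGF] at h2
      exact Filter.Tendsto.comp (continuous_snd.tendsto ξ₀) (h1.comp hu)
    have hev : ∀ᶠ x in nhds x₀, ψ x = (G (x, 0)).2 := by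
      have e1 : ∀ᶠ x in nhds x₀, F (G (x, 0)) = (x, 0) := hu.eventually hri
      have e2 : ∀ᶠ x in nhds x₀, 0 < (G (x, 0)).2 := hGc.eventually (eventually_gt_nhds ht₀pos)
      have e3 : ∀ᶠ x in nhds x₀, ‖x‖ < c :=
        (continuous_norm.continuousAt (x := x₀)).eventually (eventually_lt_nhds hx₀)
      have e4 : ∀ᶠ x in nhds x₀, Real.sqrt (‖x‖ ^ 2 + ((G (x, 0)).2) ^ 2) ≤ ε := by
        have hlim : Filter.Tendsto (fun x : E => Real.sqrt (‖x‖ ^ 2 + ((G (x, 0)).2) ^ 2))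
            (nhds x₀) (nhds (Real.sqrt (‖x₀‖ ^ 2 + t₀ ^ 2))) := by
          apply Real.continuous_sqrt.continuousAt.tendsto.comp
          exact (((continuous_norm.pow 2).tendsto x₀).add (hGc.pow 2))
        have hlt : Real.sqrt (‖x₀‖ ^ 2 + t₀ ^ 2) < ε := by
          have := hsub ‖x₀‖ t₀ (norm_nonneg x₀) ht₀pos.le
          have h2 : ‖x₀‖ + t₀ < ε := by
            rw [hcdef] at hx₀; linarith
          linarith
        exact (hlim.eventually (eventually_lt_nhds hlt)).mono fun x hx => hx.le
      filter_upwards [e1, e2, e3, e4] with x h1 h2 h3 h4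
      have hG1 : (G (x, 0)).1 = x := congrArg Prod.fst h1
      have hpz : p (x, (G (x, 0)).2) = 0 := by
        have hGx : G (x, 0) = (x, (G (x, 0)).2) := Prod.ext hG1 rfl
        have h2 : p (G (x, 0)) = 0 := congrArg Prod.snd h1
        rw [← hGx]
        exact h2
      exact (huniq x ((G (x, 0)).2) h3 h2 h4 hpz).symm
    -- conclude
    have hGsm2 : ContDiffAt ℝ (⊤ : ℕ∞) (fun x : E => (G (x, 0)).2) x₀ := by
      rw [hFa] at hGsmooth
      have h1 : ContDiffAt ℝ (⊤ : ℕ∞) (fun x : E => G (x, 0)) x₀ :=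
        hGsmooth.comp x₀ ((contDiff_id.prodMk contDiff_const).contDiffAt)
      exact contDiff_snd.contDiffAt.comp x₀ h1
    exact hGsm2.congr_of_eventuallyEq hev
  -- continuity on the ball
  have hcont : ContinuousOn ψ (ball 0 c) := by
    intro x hx
    rw [mem_ball_zero_iff] at hx
    rcases eq_or_ne x 0 with rfl | hx0
    · -- continuity at 0 via the squeeze
      have hsq0 : Filter.Tendsto ψ (nhdsWithin 0 (ball 0 c)) (nhds 0) := by
        apply squeeze_zero_norm' (a := fun x : E => (1 + 27 * M) * ‖x‖)
        · apply eventually_nhdsWithin_of_forall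
          intro y hy
          rw [mem_ball_zero_iff] at hy
          have hb := hψbound y hy
          have hy1 : ‖y‖ ≤ 1 := by
            have : c ≤ 1 := by
              rw [hcdef]; linarith [hε1]
            linarith
          rw [Real.norm_eq_abs]
          have h1 : |ψ y| ≤ ‖y‖ + 27 * M * ‖y‖ ^ 2 := by
            have := abs_sub_abs_le_abs_sub (ψ y) ‖y‖
            rw [abs_norm] at this
            calc |ψ y| ≤ ‖y‖ + |ψ y - ‖y‖| := by
                  have := abs_sub (ψ y) ‖y‖; have h2 := abs_le.mp hb
                  have h3 := le_abs_self (ψ y - ‖y‖)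
                  have h4 := abs_le.mp hb
                  nlinarith [le_abs_self (ψ y - ‖y‖), abs_nonneg (ψ y - ‖y‖),
                    abs_le.mp hb, abs_abs_sub_abs_le_abs_sub (ψ y) ‖y‖]
              _ ≤ ‖y‖ + 27 * M * ‖y‖ ^ 2 := by linarith
          calc |ψ y| ≤ ‖y‖ + 27 * M * ‖y‖ ^ 2 := h1
            _ ≤ (1 + 27 * M) * ‖y‖ := by
                nlinarith [norm_nonneg y,
                  mul_nonneg (mul_nonneg (le_of_lt hM0) (norm_nonneg y))
                    (sub_nonneg.mpr hy1)]
        · have h0 : Filter.Tendsto (fun x : E => (1 + 27 * M) * ‖x‖) (nhds 0)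
              (nhds ((1 + 27 * M) * ‖(0 : E)‖)) :=
            (continuous_const.mul continuous_norm).tendsto (0 : E)
          rw [norm_zero, mul_zero] at h0
          exact h0.mono_left nhdsWithin_le_nhds
      rw [ContinuousWithinAt, hψ0]
      exact hsq0
    · exact ((hsmooth x hx hx0).continuousAt).continuousWithinAt
  refine ⟨c, hc, ψ, 27 * M, by positivity, hψ0, hψpos, hcont, ?_, hiff, hψbound⟩
  intro x hx
  have hx' : ‖x‖ < c := by rw [← mem_ball_zero_iff]; exact hx.1
  have hx0 : x ≠ 0 := by simpa using hx.2
  exact ((hsmooth x hx' hx0).contDiffWithinAt)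

end Key

/-- Near a conical singular point, the zero set of `p̃(ξ) = ξ_d² - |ξ'|² + g(ξ)` is the
union of the two graphs `ξ_d = ψ₁(ξ')` and `ξ_d = -ψ₂(ξ')` of functions which are
positive away from `0`, continuous on the ball, smooth away from the origin, and satisfy
`ψᵢ(ξ') = |ξ'| + O(|ξ'|²)`. -/
theorem stmt14 (d : ℕ) (hd : 1 ≤ d)
    (p g : EuclideanSpace ℝ (Fin (d - 1)) × ℝ → ℝ)
    (hp : ContDiff ℝ (⊤ : ℕ∞) p)
    (hpg : ∀ ξ, p ξ = ξ.2 ^ 2 - ‖ξ.1‖ ^ 2 + g ξ)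
    (C : ℕ → ℝ)
    (hg : ∀ n : ℕ, n ≤ 3 → ∀ ξ,
      ‖iteratedFDeriv ℝ n g ξ‖ ≤ C n * Real.sqrt (‖ξ.1‖ ^ 2 + ξ.2 ^ 2) ^ (3 - n)) :
    ∃ c > 0, ∃ ψ₁ ψ₂ : EuclideanSpace ℝ (Fin (d - 1)) → ℝ,
      (∀ ξ' ∈ ball (0 : EuclideanSpace ℝ (Fin (d - 1))) c, ξ' ≠ 0 → 0 < ψ₁ ξ' ∧ 0 < ψ₂ ξ') ∧
      ContinuousOn ψ₁ (ball 0 c) ∧ ContinuousOn ψ₂ (ball 0 c) ∧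
      ContDiffOn ℝ (⊤ : ℕ∞) ψ₁ (ball 0 c \ {0}) ∧ ContDiffOn ℝ (⊤ : ℕ∞) ψ₂ (ball 0 c \ {0}) ∧
      (∀ ξ : EuclideanSpace ℝ (Fin (d - 1)) × ℝ,
        Real.sqrt (‖ξ.1‖ ^ 2 + ξ.2 ^ 2) < c →
          (p ξ = 0 ↔ ξ.2 = ψ₁ ξ.1 ∨ ξ.2 = -ψ₂ ξ.1)) ∧
      (∃ C' : ℝ, ∀ ξ' ∈ ball (0 : EuclideanSpace ℝ (Fin (d - 1))) c,
        |ψ₁ ξ' - ‖ξ'‖| ≤ C' * ‖ξ'‖ ^ 2 ∧ |ψ₂ ξ' - ‖ξ'‖| ≤ C' * ‖ξ'‖ ^ 2) := by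
  classical
  obtain ⟨c₁, hc₁, ψ₁, C₁, hC₁0, hψ₁0, hpos₁, hcont₁, hsm₁, hiff₁, hbd₁⟩ :=
    key_lemma p g hp hpg C hg
  -- the reflected symbol
  set q : EuclideanSpace ℝ (Fin (d - 1)) × ℝ → ℝ := fun ξ => p (ξ.1, -ξ.2) with hqdef
  set g' : EuclideanSpace ℝ (Fin (d - 1)) × ℝ → ℝ := fun ξ => g (ξ.1, -ξ.2) with hg'def
  have hq : ContDiff ℝ (⊤ : ℕ∞) q := hp.comp (contDiff_fst.prodMk contDiff_snd.neg)
  have hqg : ∀ ξ : EuclideanSpace ℝ (Fin (d - 1)) × ℝ,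
      q ξ = ξ.2 ^ 2 - ‖ξ.1‖ ^ 2 + g' ξ := by
    intro ξ
    show p (ξ.1, -ξ.2) = ξ.2 ^ 2 - ‖ξ.1‖ ^ 2 + g (ξ.1, -ξ.2)
    rw [hpg (ξ.1, -ξ.2)]
    norm_num
  -- the reflection as a linear isometry equivalence
  let L : (EuclideanSpace ℝ (Fin (d - 1)) × ℝ) ≃ₗᵢ[ℝ] (EuclideanSpace ℝ (Fin (d - 1)) × ℝ) :=
    { toLinearEquiv := (LinearEquiv.refl ℝ _).prodCongr (LinearEquiv.neg ℝ)
      norm_map' := fun ξ => by simp [Prod.norm_def] }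
  have hg' : ∀ n : ℕ, n ≤ 3 → ∀ ξ : EuclideanSpace ℝ (Fin (d - 1)) × ℝ,
      ‖iteratedFDeriv ℝ n g' ξ‖ ≤ C n * Real.sqrt (‖ξ.1‖ ^ 2 + ξ.2 ^ 2) ^ (3 - n) := by
    intro n hn ξ
    have h1 : g' = g ∘ L := rfl
    rw [h1, L.norm_iteratedFDeriv_comp_right g ξ n]
    have h2 := hg n hn (ξ.1, -ξ.2)
    rw [show ((-ξ.2) ^ 2 : ℝ) = ξ.2 ^ 2 by ring] at h2
    exact h2
  obtain ⟨c₂, hc₂, ψ₂, C₂, hC₂0, hψ₂0, hpos₂, hcont₂, hsm₂, hiff₂, hbd₂⟩ :=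
    key_lemma q g' hq hqg C hg'
  refine ⟨min c₁ c₂, lt_min hc₁ hc₂, ψ₁, ψ₂, ?_, ?_, ?_, ?_, ?_, ?_, ?_⟩
  · intro ξ' hξ' hne
    rw [mem_ball_zero_iff] at hξ'
    exact ⟨hpos₁ ξ' (lt_of_lt_of_le hξ' (min_le_left _ _)) hne,
      hpos₂ ξ' (lt_of_lt_of_le hξ' (min_le_right _ _)) hne⟩
  · exact hcont₁.mono (ball_subset_ball (min_le_left _ _))
  · exact hcont₂.mono (ball_subset_ball (min_le_right _ _))
  · exact hsm₁.mono (diff_subset_diff_left (ball_subset_ball (min_le_left _ _)))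
  · exact hsm₂.mono (diff_subset_diff_left (ball_subset_ball (min_le_right _ _)))
  · rintro ⟨x, t⟩ hn
    simp only at hn ⊢
    have hn₁ : Real.sqrt (‖x‖ ^ 2 + t ^ 2) < c₁ := lt_of_lt_of_le hn (min_le_left _ _)
    have hn₂ : Real.sqrt (‖x‖ ^ 2 + (-t) ^ 2) < c₂ := by
      rw [show ((-t) ^ 2 : ℝ) = t ^ 2 by ring]
      exact lt_of_lt_of_le hn (min_le_right _ _)
    have h1 := hiff₁ (x, t) hn₁
    have h2 := hiff₂ (x, -t) hn₂
    simp only at h1 h2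
    constructor
    · intro hz
      rcases le_or_gt 0 t with ht | ht
      · exact Or.inl (h1.mp ⟨hz, ht⟩)
      · refine Or.inr ?_
        have hq0 : q (x, -t) = 0 := by
          show p (x, -(-t)) = 0
          rw [neg_neg]
          exact hz
        have := h2.mp ⟨hq0, by linarith⟩
        linarith
    · rintro (h | h)
      · exact (h1.mpr h).1
      · have h3 := h2.mpr (by rw [h, neg_neg])
        have hq0 : p (x, -(-t)) = 0 := h3.1
        rwa [neg_neg] at hq0
  · refine ⟨C₁ + C₂, ?_⟩
    intro ξ' hξ'
    rw [mem_ball_zero_iff] at hξ'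
    have h1 := hbd₁ ξ' (lt_of_lt_of_le hξ' (min_le_left _ _))
    have h2 := hbd₂ ξ' (lt_of_lt_of_le hξ' (min_le_right _ _))
    constructor
    · calc |ψ₁ ξ' - ‖ξ'‖| ≤ C₁ * ‖ξ'‖ ^ 2 := h1
        _ ≤ (C₁ + C₂) * ‖ξ'‖ ^ 2 := by nlinarith [sq_nonneg ‖ξ'‖]
    · calc |ψ₂ ξ' - ‖ξ'‖| ≤ C₂ * ‖ξ'‖ ^ 2 := h2
        _ ≤ (C₁ + C₂) * ‖ξ'‖ ^ 2 := by nlinarith [sq_nonneg ‖ξ'‖]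
end

section
/- Let 0 < ε₁ < ε₂ < ε₃ and suppose ε₁ < s < ε₂ < t < ε₃ or ε₁ < t < ε₂ < s < ε₃. Then the quantity D(s,t) := s²t − (ε₁+ε₂+ε₃)st + (ε₁ε₂+ε₁ε₃+ε₂ε₃)t − ε₁ε₂ε₃ is nonzero, and the determinant of the first fundamental form of the Darboux parametrization, (EG−F²)(s,t) = ε₁ε₂ε₃(s−t)·D(s,t) / (16 t³ ∏_{i=1}^3 (s−εᵢ)(t−εᵢ)), is strictly positive. -/
/-- Regularity of the Darboux parametrization: the quantity `D(s,t)` is nonzero and the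
determinant of the first fundamental form `(EG - F²)(s,t)` is strictly positive. -/
theorem stmt18 (ε₁ ε₂ ε₃ s t : ℝ) (h₀ : 0 < ε₁) (h₁₂ : ε₁ < ε₂) (h₂₃ : ε₂ < ε₃)
    (hst : (ε₁ < s ∧ s < ε₂ ∧ ε₂ < t ∧ t < ε₃)
      ∨ (ε₁ < t ∧ t < ε₂ ∧ ε₂ < s ∧ s < ε₃)) :
    let D : ℝ := s ^ 2 * t - (ε₁ + ε₂ + ε₃) * s * t
      + (ε₁ * ε₂ + ε₁ * ε₃ + ε₂ * ε₃) * t - ε₁ * ε₂ * ε₃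
    D ≠ 0 ∧
    0 < ε₁ * ε₂ * ε₃ * (s - t) * D
      / (16 * t ^ 3 * ((s - ε₁) * (t - ε₁)) * ((s - ε₂) * (t - ε₂)) * ((s - ε₃) * (t - ε₃))) := by
  intro D
  have hε₂ : 0 < ε₂ := lt_trans h₀ h₁₂
  have hε₃ : 0 < ε₃ := lt_trans hε₂ h₂₃
  have hεε : 0 < ε₁ * ε₂ * ε₃ := mul_pos (mul_pos h₀ hε₂) hε₃
  have hkey : D = t * (s - ε₂) * (s - ε₁ - ε₃) + ε₁ * ε₃ * (t - ε₂) := by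
    simp only [D]; ring
  obtain ⟨h1, h2, h3, h4⟩ | ⟨h1, h2, h3, h4⟩ := hst
  · -- ε₁ < s < ε₂ < t < ε₃
    have ht : 0 < t := lt_trans hε₂ h3
    have hD : 0 < D := by
      rw [hkey]
      have A : 0 < t * (ε₂ - s) * (ε₁ + ε₃ - s) :=
        mul_pos (mul_pos ht (by linarith)) (by linarith)
      have B : 0 < ε₁ * ε₃ * (t - ε₂) := mul_pos (mul_pos h₀ hε₃) (by linarith)
      nlinarith
    refine ⟨ne_of_gt hD, div_pos_of_neg_of_neg ?_ ?_⟩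
    · rw [mul_assoc]
      exact mul_neg_of_pos_of_neg hεε (mul_neg_of_neg_of_pos (by linarith) hD)
    · have hA : 0 < 16 * t ^ 3 * ((s - ε₁) * (t - ε₁)) := by
        have : 0 < t ^ 3 := by positivity
        have : 0 < (s - ε₁) * (t - ε₁) := mul_pos (by linarith) (by linarith)
        nlinarith
      have hB : (s - ε₂) * (t - ε₂) < 0 := mul_neg_of_neg_of_pos (by linarith) (by linarith)
      have hC : 0 < (s - ε₃) * (t - ε₃) := mul_pos_of_neg_of_neg (by linarith) (by linarith)
      exact mul_neg_of_neg_of_pos (mul_neg_of_pos_of_neg hA hB) hC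
  · -- ε₁ < t < ε₂ < s < ε₃
    have ht : 0 < t := lt_trans h₀ h1
    have hD : D < 0 := by
      rw [hkey]
      have A : t * (s - ε₂) * (s - ε₁ - ε₃) < 0 :=
        mul_neg_of_pos_of_neg (mul_pos ht (by linarith)) (by linarith)
      have B : ε₁ * ε₃ * (t - ε₂) < 0 := mul_neg_of_pos_of_neg (mul_pos h₀ hε₃) (by linarith)
      linarith
    refine ⟨ne_of_lt hD, div_pos_of_neg_of_neg ?_ ?_⟩
    · exact mul_neg_of_pos_of_neg (mul_pos hεε (by linarith)) hD
    · have hA : 0 < 16 * t ^ 3 * ((s - ε₁) * (t - ε₁)) := by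
        have : 0 < t ^ 3 := by positivity
        have : 0 < (s - ε₁) * (t - ε₁) := mul_pos (by linarith) (by linarith)
        nlinarith
      have hB : (s - ε₂) * (t - ε₂) < 0 := mul_neg_of_pos_of_neg (by linarith) (by linarith)
      have hC : 0 < (s - ε₃) * (t - ε₃) := mul_pos_of_neg_of_neg (by linarith) (by linarith)
      exact mul_neg_of_neg_of_pos (mul_neg_of_pos_of_neg hA hB) hC
end
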